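/- arXiv:2410.18056 — 10 statements merged into one kernel-verified Lean document; each statement's English description precedes it below -/
import Mathlib

section
/- For q > -1 and υ a positive integer, the Konhauser polynomial Z_s^{(q)}(w;υ) satisfies the derivative relation D_w Z_s^{(q)}(w;υ) = -υ w^{υ-1} Z_{s-1}^{(q+υ)}(w;υ) for s ≥ 1. -/
open Real MeasureTheory Finset

/-- Pochhammer symbol (a)_n = a(a+1)⋯(a+n-1). -/
noncomputable def poch (a : ℝ) (n : ℕ) : ℝ := ∏ i ∈ Finset.range n, (a + i)

/-- Generalized binomial coefficient C(a,k) = a(a-1)⋯(a-k+1)/k!. -/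
noncomputable def gchoose (a : ℝ) (k : ℕ) : ℝ :=
  (∏ i ∈ Finset.range k, (a - i)) / k.factorial

/-- Konhauser polynomial of the first kind Z_s^{(χ)}(w;υ). -/
noncomputable def konZ (s : ℕ) (χ : ℝ) (υ : ℕ) (w : ℝ) : ℝ :=
  (Real.Gamma ((υ : ℝ) * (s : ℝ) + χ + 1) / s.factorial) *
    ∑ l ∈ Finset.range (s + 1),
      (-1 : ℝ) ^ l * (s.choose l : ℝ) * w ^ (υ * l) / Real.Gamma ((υ : ℝ) * (l : ℝ) + χ + 1)

/-- Konhauser polynomial of the second kind Y_s^{(χ)}(w;υ). -/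
noncomputable def konY (s : ℕ) (χ : ℝ) (υ : ℕ) (w : ℝ) : ℝ :=
  (1 / (s.factorial : ℝ)) *
    ∑ m ∈ Finset.range (s + 1), w ^ m / m.factorial *
      ∑ l ∈ Finset.range (m + 1),
        (-1 : ℝ) ^ l * (m.choose l : ℝ) * poch ((χ + (l : ℝ) + 1) / (υ : ℝ)) s

/-- Finite orthogonal polynomial N_s^{(p)}(w). -/
noncomputable def finN (s : ℕ) (p : ℝ) (w : ℝ) : ℝ :=
  (-1 : ℝ) ^ s *
    ∑ k ∈ Finset.range (s + 1),
      (k.factorial : ℝ) * gchoose (p - (s : ℝ) - 1) k * (s.choose (s - k) : ℝ) * (-w) ^ k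

/-- Generalized Laguerre polynomial L_n^{(α)}(x). -/
noncomputable def lagL (n : ℕ) (α : ℝ) (x : ℝ) : ℝ :=
  ∑ k ∈ Finset.range (n + 1),
    (-1 : ℝ) ^ k * gchoose ((n : ℝ) + α) (n - k) * x ^ k / k.factorial

/-- Finite bivariate N-Konhauser polynomial (first set) ₖN_{s;υ}^{(p,q)}(t,w). -/
noncomputable def NK (s : ℕ) (υ : ℕ) (p q : ℝ) (t w : ℝ) : ℝ :=
  Real.Gamma (p - (s : ℝ)) *
    ∑ k ∈ Finset.range (s + 1), ∑ m ∈ Finset.range (s - k + 1),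
      poch (-(s : ℝ)) (k + m) * t ^ (s - k) * w ^ (υ * m) /
        (Real.Gamma (p - 2 * (s : ℝ) + (k : ℝ)) * Real.Gamma (q + 1 + (υ : ℝ) * (m : ℝ)) *
          k.factorial * m.factorial)

/-- Finite bivariate N-Konhauser polynomial (second set) ₖ𝒩_{s;υ}^{(p,q)}(t,w). -/
noncomputable def NK2 (s : ℕ) (υ : ℕ) (p q : ℝ) (t w : ℝ) : ℝ :=
  finN s p t * ∑ k ∈ Finset.range (s + 1), konY k q υ w

/-- Generalized Laguerre-Konhauser polynomial of Bin-Saad ᵤL_s^{(p,q)}(t,w). -/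
noncomputable def LKgen (s : ℕ) (υ : ℕ) (p q : ℝ) (t w : ℝ) : ℝ :=
  (s.factorial : ℝ) *
    ∑ k ∈ Finset.range (s + 1), ∑ m ∈ Finset.range (s - k + 1),
      (-1 : ℝ) ^ (k + m) * t ^ ((k : ℝ) + p) * w ^ ((υ : ℝ) * (m : ℝ) + q) /
        ((k.factorial : ℝ) * m.factorial * (s - k - m).factorial *
          Real.Gamma ((k : ℝ) + p + 1) * Real.Gamma (q + (υ : ℝ) * (m : ℝ) + 1))

/-- Bivariate biorthogonal Laguerre-Konhauser polynomial ₖL_{s;υ}^{(p,q)}(t,w). -/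
noncomputable def KL (s : ℕ) (υ : ℕ) (p q : ℝ) (t w : ℝ) : ℝ :=
  (Real.Gamma (p + 1 + (s : ℝ)) / s.factorial) *
    ∑ k ∈ Finset.range (s + 1), ∑ m ∈ Finset.range (s - k + 1),
      poch (-(s : ℝ)) (k + m) * t ^ k * w ^ (υ * m) /
        (Real.Gamma (p + 1 + (k : ℝ)) * Real.Gamma (q + 1 + (υ : ℝ) * (m : ℝ)) *
          k.factorial * m.factorial)

theorem konZ_deriv_rel (q : ℝ) (hq : q > -1) (υ : ℕ) (hυ : 0 < υ) (s : ℕ) (hs : 1 ≤ s)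
    (w : ℝ) :
    deriv (fun x => konZ s q υ x) w =
      -(υ : ℝ) * w ^ (υ - 1) * konZ (s - 1) (q + (υ : ℝ)) υ w := by

  obtain ⟨t, rfl⟩ : ∃ t, s = t + 1 := ⟨s - 1, by omega⟩
  have hd : HasDerivAt (fun x => konZ (t + 1) q υ x)
      ((Real.Gamma ((υ : ℝ) * ((t + 1 : ℕ) : ℝ) + q + 1) / (t + 1).factorial) *
        ∑ l ∈ Finset.range (t + 1 + 1),
          (-1 : ℝ) ^ l * ((t + 1).choose l : ℝ) * ((↑(υ * l) : ℝ) * w ^ (υ * l - 1)) /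
            Real.Gamma ((υ : ℝ) * (l : ℝ) + q + 1)) w := by
    unfold konZ
    apply HasDerivAt.const_mul
    apply HasDerivAt.fun_sum
    intro l _
    exact ((hasDerivAt_pow (υ * l) w).const_mul
      ((-1 : ℝ) ^ l * ((t + 1).choose l : ℝ))).div_const _
  rw [hd.deriv, Finset.sum_range_succ']
  simp only [Nat.mul_zero, Nat.cast_zero, zero_mul, mul_zero, zero_div, add_zero,
    Nat.add_sub_cancel, pow_zero, one_mul, mul_zero]
  unfold konZ
  rw [Finset.mul_sum, Finset.mul_sum, Finset.mul_sum]
  apply Finset.sum_congr rfl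
  intro l hl
  have hG1 : Real.Gamma ((υ : ℝ) * ((t + 1 : ℕ) : ℝ) + q + 1)
      = Real.Gamma ((υ : ℝ) * ((t : ℕ) : ℝ) + (q + (υ : ℝ)) + 1) := by
    congr 1; push_cast; ring
  have hG2 : Real.Gamma ((υ : ℝ) * (((l + 1 : ℕ)) : ℝ) + q + 1)
      = Real.Gamma ((υ : ℝ) * ((l : ℕ) : ℝ) + (q + (υ : ℝ)) + 1) := by
    congr 1; push_cast; ring
  have hexp : υ * (l + 1) - 1 = (υ - 1) + υ * l := by
    have : υ * (l + 1) = υ * l + υ := by ring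
    omega
  have hGlpos : 0 < Real.Gamma ((υ : ℝ) * ((l : ℕ) : ℝ) + (q + (υ : ℝ)) + 1) := by
    apply Real.Gamma_pos_of_pos
    have h1 : (0 : ℝ) ≤ (υ : ℝ) * (l : ℝ) := by positivity
    have h2 : (1 : ℝ) ≤ (υ : ℝ) := by exact_mod_cast hυ
    linarith
  have hch : ((t + 1).choose (l + 1) : ℝ) = ((t : ℝ) + 1) * (t.choose l : ℝ) / ((l : ℝ) + 1) := by
    rw [eq_div_iff (by positivity)]
    have := Nat.add_one_mul_choose_eq t l
    have : ((t + 1) * t.choose l : ℕ) = ((t + 1).choose (l + 1) * (l + 1) : ℕ) := this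
    exact_mod_cast (congrArg (Nat.cast : ℕ → ℝ) this).symm
  have hfac : ((t + 1).factorial : ℝ) = ((t : ℝ) + 1) * (t.factorial : ℝ) := by
    rw [Nat.factorial_succ]; push_cast; ring
  rw [hG1, hG2, hexp, pow_add, hch, hfac]
  have hf : (t.factorial : ℝ) ≠ 0 := by positivity
  have hl1 : ((l : ℝ) + 1) ≠ 0 := by positivity
  have ht1 : ((t : ℝ) + 1) ≠ 0 := by positivity
  field_simp
  push_cast
  ring
end

section
/- For υ a positive integer and χ > -1, the Konhauser polynomial Z_s^{(χ)}(w;υ) satisfies D_w^υ [w^{χ+1} D_w Z_s^{(χ)}(w;υ)] = w^{χ+1} D_w Z_s^{(χ)}(w;υ) - sυ w^χ Z_s^{(χ)}(w;υ). -/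
open Real MeasureTheory Finset

lemma gamma_shift (z : ℝ) (hz : 0 < z) (n : ℕ) :
    Real.Gamma (z + n) = (∏ i ∈ Finset.range n, (z + i)) * Real.Gamma z := by
  induction n with
  | zero => simp
  | succ n ih =>
    have h1 : z + ((n + 1 : ℕ) : ℝ) = (z + n) + 1 := by push_cast; ring
    have h2 : (z + (n : ℝ)) ≠ 0 := by positivity
    rw [h1, Real.Gamma_add_one h2, ih, Finset.prod_range_succ]
    ring

lemma iter_sum_rpow {ι : Type*} (t : Finset ι) (c r : ι → ℝ) (n : ℕ) (x : ℝ) (hx : 0 < x) :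
    iteratedDeriv n (fun y => ∑ l ∈ t, c l * y ^ (r l)) x
      = ∑ l ∈ t, c l * (∏ i ∈ Finset.range n, (r l - i)) * x ^ (r l - n) := by
  induction n generalizing x with
  | zero => simp
  | succ n ih =>
    rw [iteratedDeriv_succ]
    have hev : (iteratedDeriv n (fun y => ∑ l ∈ t, c l * y ^ (r l)))
        =ᶠ[nhds x] fun y => ∑ l ∈ t, c l * (∏ i ∈ Finset.range n, (r l - i)) * y ^ (r l - n) := by
      filter_upwards [Ioi_mem_nhds hx] with y hy using ih y hy
    rw [hev.deriv_eq]
    have hd : HasDerivAt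
        (fun y : ℝ => ∑ l ∈ t, c l * (∏ i ∈ Finset.range n, (r l - i)) * y ^ (r l - n))
        (∑ l ∈ t, c l * (∏ i ∈ Finset.range n, (r l - i)) * ((r l - n) * x ^ (r l - n - 1))) x := by
      refine HasDerivAt.fun_sum fun l _ => ?_
      exact (Real.hasDerivAt_rpow_const (Or.inl hx.ne')).const_mul _
    rw [hd.deriv]
    refine Finset.sum_congr rfl fun l _ => ?_
    rw [Finset.prod_range_succ,
      show (r l - ((n + 1 : ℕ) : ℝ)) = r l - n - 1 by push_cast; ring]
    ring

theorem konZ_iteratedDeriv_rel (χ : ℝ) (hχ : χ > -1) (υ : ℕ) (hυ : 0 < υ) (s : ℕ)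
    (w : ℝ) (hw : 0 < w) :
    iteratedDeriv υ (fun x => x ^ (χ + 1) * deriv (fun y => konZ s χ υ y) x) w =
      w ^ (χ + 1) * deriv (fun y => konZ s χ υ y) w - (s : ℝ) * (υ : ℝ) * w ^ χ * konZ s χ υ w := by
  set C : ℝ := Real.Gamma ((υ : ℝ) * (s : ℝ) + χ + 1) / s.factorial with hC
  set c : ℕ → ℝ := fun l => (-1 : ℝ) ^ l * (s.choose l : ℝ) / Real.Gamma ((υ : ℝ) * (l : ℝ) + χ + 1) with hc
  have hkon : ∀ y : ℝ, konZ s χ υ y = ∑ l ∈ Finset.range (s + 1), (C * c l) * y ^ (υ * l) := by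
    intro y
    rw [konZ, Finset.mul_sum]
    exact Finset.sum_congr rfl fun l _ => by rw [hc]; ring
  have hderiv : ∀ x : ℝ, HasDerivAt (fun y => konZ s χ υ y)
      (∑ l ∈ Finset.range (s + 1), (C * c l) * (((υ * l : ℕ) : ℝ) * x ^ (υ * l - 1))) x := by
    intro x
    have hfe : (fun y => konZ s χ υ y)
        = fun y => ∑ l ∈ Finset.range (s + 1), (C * c l) * y ^ (υ * l) := funext hkon
    rw [hfe]
    exact HasDerivAt.fun_sum fun l _ => (hasDerivAt_pow (υ * l) x).const_mul (C * c l)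
  have hB : ∀ x : ℝ, 0 < x → x ^ (χ + 1) * deriv (fun y => konZ s χ υ y) x
      = ∑ l ∈ Finset.range (s + 1),
          (C * c l * ((υ * l : ℕ) : ℝ)) * x ^ (χ + (υ : ℝ) * l) := by
    intro x hx
    rw [(hderiv x).deriv, Finset.mul_sum]
    refine Finset.sum_congr rfl fun l _ => ?_
    rcases Nat.eq_zero_or_pos (υ * l) with h | h
    · simp [h]
    · have hcomb : x ^ (χ + 1) * x ^ (υ * l - 1) = x ^ (χ + (υ : ℝ) * l) := by
        rw [← Real.rpow_natCast x (υ * l - 1), ← Real.rpow_add hx]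
        congr 1
        rw [Nat.cast_sub h]
        push_cast
        ring
      rw [← hcomb]
      ring
  -- replace the function near w and apply iter_sum_rpow
  have hEq : (fun x : ℝ => x ^ (χ + 1) * deriv (fun y => konZ s χ υ y) x)
      =ᶠ[nhds w] fun x => ∑ l ∈ Finset.range (s + 1),
          (C * c l * ((υ * l : ℕ) : ℝ)) * x ^ (χ + (υ : ℝ) * l) := by
    filter_upwards [Ioi_mem_nhds hw] with x hx using hB x hx
  rw [Filter.EventuallyEq.iteratedDeriv_eq υ hEq,
    iter_sum_rpow (Finset.range (s + 1)) (fun l => C * c l * ((υ * l : ℕ) : ℝ))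
      (fun l => χ + (υ : ℝ) * l) υ w hw, hB w hw]
  -- rewrite the konZ term
  have hRHS2 : (s : ℝ) * (υ : ℝ) * w ^ χ * konZ s χ υ w
      = ∑ l ∈ Finset.range (s + 1), (C * c l * s * υ) * w ^ (χ + (υ : ℝ) * l) := by
    rw [hkon w, Finset.mul_sum]
    refine Finset.sum_congr rfl fun l _ => ?_
    have hcomb : w ^ χ * w ^ (υ * l) = w ^ (χ + (υ : ℝ) * l) := by
      rw [← Real.rpow_natCast w (υ * l), ← Real.rpow_add hw]
      push_cast
      ring
    rw [← hcomb]
    ring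
  rw [hRHS2, ← Finset.sum_sub_distrib]
  rw [Finset.sum_range_succ' _ s, Finset.sum_range_succ _ s]
  have hzero1 : C * c 0 * ((υ * 0 : ℕ) : ℝ) * (∏ i ∈ Finset.range υ, (χ + (υ : ℝ) * (0:ℕ) - i))
      * w ^ (χ + (υ : ℝ) * (0:ℕ) - υ) = 0 := by simp
  have hzero2 : C * c s * ((υ * s : ℕ) : ℝ) * w ^ (χ + (υ : ℝ) * s)
      - C * c s * s * υ * w ^ (χ + (υ : ℝ) * s) = 0 := by push_cast; ring
  rw [hzero1, hzero2, add_zero, add_zero]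
  refine Finset.sum_congr rfl fun m hm => ?_
  have hm' : m < s := Finset.mem_range.mp hm
  -- key combinatorial identity
  have key : ((s.choose (m + 1) : ℝ)) * ((m : ℝ) + 1) = (s.choose m : ℝ) * ((s : ℝ) - m) := by
    have h := Nat.choose_succ_right_eq s m
    have := congrArg (Nat.cast : ℕ → ℝ) h
    push_cast [Nat.cast_sub hm'.le] at this
    linarith
  -- positivity facts
  have hz : (0 : ℝ) < (υ : ℝ) * m + χ + 1 := by
    have h0 : (0 : ℝ) ≤ (υ : ℝ) * m := by positivity
    linarith
  have hΓz : (0 : ℝ) < Real.Gamma ((υ : ℝ) * m + χ + 1) := Real.Gamma_pos_of_pos hz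
  have hP : (0 : ℝ) < ∏ i ∈ Finset.range υ, ((υ : ℝ) * m + χ + 1 + i) :=
    Finset.prod_pos fun i _ => by positivity
  -- Gamma shift
  have hΓ1 : Real.Gamma ((υ : ℝ) * ((m + 1 : ℕ) : ℝ) + χ + 1)
      = (∏ i ∈ Finset.range υ, ((υ : ℝ) * m + χ + 1 + i)) * Real.Gamma ((υ : ℝ) * m + χ + 1) := by
    have h := gamma_shift ((υ : ℝ) * m + χ + 1) hz υ
    rw [show (υ : ℝ) * ((m + 1 : ℕ) : ℝ) + χ + 1 = (υ : ℝ) * m + χ + 1 + υ by push_cast; ring]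
    exact h
  -- product reindex
  have hprod : (∏ i ∈ Finset.range υ, (χ + (υ : ℝ) * ((m + 1 : ℕ) : ℝ) - i))
      = ∏ i ∈ Finset.range υ, ((υ : ℝ) * m + χ + 1 + i) := by
    rw [← Finset.prod_range_reflect (fun i => χ + (υ : ℝ) * ((m + 1 : ℕ) : ℝ) - (i : ℝ)) υ]
    refine Finset.prod_congr rfl fun j hj => ?_
    have hj' : j < υ := Finset.mem_range.mp hj
    have hcast : ((υ - 1 - j : ℕ) : ℝ) = (υ : ℝ) - 1 - j := by
      rw [Nat.cast_sub (by omega), Nat.cast_sub (by omega)]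
      push_cast
      ring
    simp only [hcast]
    push_cast
    ring
  -- final per-term identity
  simp only [hc]
  rw [hprod, hΓ1,
    show χ + (υ : ℝ) * ((m + 1 : ℕ) : ℝ) - υ = χ + (υ : ℝ) * m by push_cast; ring]
  rw [pow_succ]
  push_cast
  have hPne := hP.ne'
  have hGne := hΓz.ne'
  field_simp
  linear_combination (-C) * key
end

section
/- For υ a positive integer, χ > -1 and s ≥ 1, the Konhauser polynomial Z_s^{(χ)}(w;υ) satisfies D_w^υ [w^{χ+1} D_w Z_s^{(χ)}(w;υ)] = -υ w^χ (υ(s-1)+χ+1)_υ Z_{s-1}^{(χ)}(w;υ), where (a)_υ denotes the Pochhammer symbol. -/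
open Real MeasureTheory Finset

lemma gamma_prod (x : ℝ) (hx : 0 < x) (n : ℕ) :
    Real.Gamma (x + n) = Real.Gamma x * ∏ i ∈ Finset.range n, (x + i) := by
  induction n with
  | zero => simp
  | succ n ih =>
    have h : x + (n + 1 : ℕ) = (x + n) + 1 := by push_cast; ring
    rw [h, Real.Gamma_add_one (by positivity), ih, Finset.prod_range_succ]
    ring

lemma itd_sum_rpow (m n : ℕ) (c e : ℕ → ℝ) :
    ∀ w : ℝ, 0 < w → iteratedDeriv n (fun x => ∑ l ∈ Finset.range m, c l * x ^ (e l)) w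
      = ∑ l ∈ Finset.range m, c l * (∏ i ∈ Finset.range n, (e l - i)) * w ^ (e l - n) := by
  induction n with
  | zero => intro w hw; simp
  | succ n ih =>
    intro w hw
    rw [iteratedDeriv_succ]
    have heq : deriv (iteratedDeriv n (fun x => ∑ l ∈ Finset.range m, c l * x ^ (e l))) w
        = deriv (fun x => ∑ l ∈ Finset.range m,
            c l * (∏ i ∈ Finset.range n, (e l - i)) * x ^ (e l - n)) w := by
      apply Filter.EventuallyEq.deriv_eq
      filter_upwards [isOpen_Ioi.mem_nhds hw] with x hx
      exact ih x hx
    rw [heq]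
    have hd : HasDerivAt (fun x : ℝ => ∑ l ∈ Finset.range m,
        c l * (∏ i ∈ Finset.range n, (e l - i)) * x ^ (e l - n))
        (∑ l ∈ Finset.range m, c l * (∏ i ∈ Finset.range n, (e l - i)) *
          ((e l - n) * w ^ (e l - n - 1))) w := by
      apply HasDerivAt.fun_sum
      intro l _
      exact (Real.hasDerivAt_rpow_const (Or.inl hw.ne')).const_mul _
    rw [hd.deriv]
    apply Finset.sum_congr rfl
    intro l _
    rw [Finset.prod_range_succ]
    have hq : e l - ((n : ℝ) + 1) = e l - n - 1 := by ring
    push_cast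
    rw [hq]
    ring

lemma F_repr (χ : ℝ) (υ s : ℕ) (hυ : 0 < υ) (x : ℝ) (hx : 0 < x) :
    x ^ (χ + 1) * deriv (fun y => konZ s χ υ y) x
      = ∑ l ∈ Finset.range (s + 1),
          (Real.Gamma ((υ : ℝ) * s + χ + 1) / s.factorial *
            ((-1 : ℝ) ^ l * (s.choose l : ℝ) * ((υ * l : ℕ) : ℝ) /
              Real.Gamma ((υ : ℝ) * l + χ + 1))) * x ^ (χ + (υ : ℝ) * l) := by
  have hD : HasDerivAt (fun y => konZ s χ υ y)
      (Real.Gamma ((υ : ℝ) * s + χ + 1) / s.factorial *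
        ∑ l ∈ Finset.range (s + 1),
          (-1 : ℝ) ^ l * (s.choose l : ℝ) * (((υ * l : ℕ) : ℝ) * x ^ (υ * l - 1)) /
            Real.Gamma ((υ : ℝ) * l + χ + 1)) x := by
    simp only [konZ]
    apply HasDerivAt.const_mul
    apply HasDerivAt.fun_sum
    intro l _
    exact ((hasDerivAt_pow (υ * l) x).const_mul _).div_const _
  rw [hD.deriv, Finset.mul_sum, Finset.mul_sum]
  apply Finset.sum_congr rfl
  intro l _
  rcases Nat.eq_zero_or_pos l with rfl | hl
  · simp
  · have h1 : 1 ≤ υ * l := Nat.one_le_iff_ne_zero.mpr (by positivity)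
    have hc : ((υ * l - 1 : ℕ) : ℝ) = (υ : ℝ) * l - 1 := by
      rw [Nat.cast_sub h1]; push_cast; ring
    have hxx : x ^ (χ + 1) * x ^ ((υ * l - 1 : ℕ)) = x ^ (χ + (υ : ℝ) * l) := by
      rw [← Real.rpow_natCast x (υ * l - 1), hc, ← Real.rpow_add hx]
      congr 1; ring
    rw [← hxx]; ring

lemma itd_eventuallyEq {f g : ℝ → ℝ} {w : ℝ} (n : ℕ) (h : f =ᶠ[nhds w] g) :
    iteratedDeriv n f w = iteratedDeriv n g w := by
  have H : ∀ n, iteratedDeriv n f =ᶠ[nhds w] iteratedDeriv n g := by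
    intro n
    induction n with
    | zero => simpa using h
    | succ n ih => rw [iteratedDeriv_succ, iteratedDeriv_succ]; exact ih.deriv
  exact (H n).eq_of_nhds

theorem konZ_iteratedDeriv_lower (χ : ℝ) (hχ : χ > -1) (υ : ℕ) (hυ : 0 < υ) (s : ℕ)
    (hs : 1 ≤ s) (w : ℝ) (hw : 0 < w) :
    iteratedDeriv υ (fun x => x ^ (χ + 1) * deriv (fun y => konZ s χ υ y) x) w =
      -(υ : ℝ) * w ^ χ * poch ((υ : ℝ) * ((s : ℝ) - 1) + χ + 1) υ * konZ (s - 1) χ υ w := by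
  obtain ⟨t, rfl⟩ : ∃ t, s = t + 1 := ⟨s - 1, (Nat.succ_pred_eq_of_pos hs).symm⟩
  have hev : (fun x => x ^ (χ + 1) * deriv (fun y => konZ (t + 1) χ υ y) x)
      =ᶠ[nhds w] (fun x => ∑ l ∈ Finset.range ((t + 1) + 1),
          (Real.Gamma ((υ : ℝ) * (t + 1 : ℕ) + χ + 1) / (t + 1).factorial *
            ((-1 : ℝ) ^ l * ((t + 1).choose l : ℝ) * ((υ * l : ℕ) : ℝ) /
              Real.Gamma ((υ : ℝ) * l + χ + 1))) * x ^ (χ + (υ : ℝ) * l)) := by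
    filter_upwards [isOpen_Ioi.mem_nhds hw] with x hx
    exact F_repr χ υ (t + 1) hυ x hx
  calc iteratedDeriv υ (fun x => x ^ (χ + 1) * deriv (fun y => konZ (t + 1) χ υ y) x) w
      = iteratedDeriv υ (fun x => ∑ l ∈ Finset.range ((t + 1) + 1),
          (Real.Gamma ((υ : ℝ) * (t + 1 : ℕ) + χ + 1) / (t + 1).factorial *
            ((-1 : ℝ) ^ l * ((t + 1).choose l : ℝ) * ((υ * l : ℕ) : ℝ) /
              Real.Gamma ((υ : ℝ) * l + χ + 1))) * x ^ (χ + (υ : ℝ) * l)) w :=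
        itd_eventuallyEq υ hev
    _ = ∑ l ∈ Finset.range ((t + 1) + 1),
          (Real.Gamma ((υ : ℝ) * (t + 1 : ℕ) + χ + 1) / (t + 1).factorial *
            ((-1 : ℝ) ^ l * ((t + 1).choose l : ℝ) * ((υ * l : ℕ) : ℝ) /
              Real.Gamma ((υ : ℝ) * l + χ + 1))) *
            (∏ i ∈ Finset.range υ, (χ + (υ : ℝ) * l - i)) * w ^ (χ + (υ : ℝ) * l - υ) :=
        itd_sum_rpow ((t + 1) + 1) υ _ (fun l => χ + (υ : ℝ) * l) w hw
    _ = -(υ : ℝ) * w ^ χ * poch ((υ : ℝ) * (((t + 1 : ℕ) : ℝ) - 1) + χ + 1) υ *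
          konZ ((t + 1) - 1) χ υ w := by
        simp only [konZ, poch, Nat.add_sub_cancel]
        rw [Finset.sum_range_succ']
        rw [Finset.mul_sum, Finset.mul_sum]
        simp only [Nat.mul_zero, Nat.cast_zero, mul_zero, zero_div, zero_mul, add_zero]
        apply Finset.sum_congr rfl
        intro j hj
        have h0j : (0:ℝ) ≤ (υ:ℝ) * j := by positivity
        have hg0 : 0 < (υ:ℝ) * j + χ + 1 := by linarith
        have h0t : (0:ℝ) ≤ (υ:ℝ) * t := by positivity
        have hgT : 0 < (υ:ℝ) * t + χ + 1 := by linarith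
        have hQ : Real.Gamma ((υ:ℝ) * ↑(j+1) + χ + 1)
            = Real.Gamma ((υ:ℝ) * j + χ + 1) * ∏ i ∈ Finset.range υ, (χ + (υ:ℝ) * ↑(j+1) - i) := by
          rw [show (υ:ℝ) * ↑(j+1) + χ + 1 = ((υ:ℝ) * j + χ + 1) + υ by push_cast; ring,
            gamma_prod _ hg0 υ]
          congr 1
          rw [← Finset.prod_range_reflect (fun i => χ + (υ:ℝ) * ↑(j+1) - i) υ]
          apply Finset.prod_congr rfl
          intro i hi
          have hi' : i < υ := Finset.mem_range.mp hi
          have hcs : ((υ - 1 - i : ℕ) : ℝ) = (υ:ℝ) - 1 - i := by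
            rw [Nat.cast_sub (by omega), Nat.cast_sub (by omega)]; push_cast; ring
          rw [hcs]; push_cast; ring
        have hP : (∏ i ∈ Finset.range υ, ((υ:ℝ) * (((t+1:ℕ):ℝ) - 1) + χ + 1 + i)) *
            Real.Gamma ((υ:ℝ) * t + χ + 1) = Real.Gamma ((υ:ℝ) * ((t+1:ℕ):ℝ) + χ + 1) := by
          rw [show (υ:ℝ) * ((t+1:ℕ):ℝ) + χ + 1 = ((υ:ℝ) * t + χ + 1) + υ by push_cast; ring,
            gamma_prod _ hgT υ, mul_comm]
          congr 1
          apply Finset.prod_congr rfl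
          intro i _
          push_cast; ring
        have hch : ((t+1:ℕ):ℝ) * (t.choose j) = (((t+1).choose (j+1)):ℝ) * ((j+1:ℕ):ℝ) := by
          exact_mod_cast Nat.add_one_mul_choose_eq t j
        have hfac : (((t+1).factorial :ℕ):ℝ) = ((t+1:ℕ):ℝ) * t.factorial := by
          exact_mod_cast congrArg (Nat.cast (R := ℝ)) (Nat.factorial_succ t)
        have hQpos : (0:ℝ) < ∏ i ∈ Finset.range υ, (χ + (υ:ℝ) * ↑(j+1) - i) := by
          apply Finset.prod_pos
          intro i hi
          have hi' : i < υ := Finset.mem_range.mp hi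
          have h1 : (i:ℝ) + 1 ≤ (υ:ℝ) := by exact_mod_cast hi'
          have h2 : (υ:ℝ) ≤ (υ:ℝ) * ↑(j+1) := by
            have : (1:ℝ) ≤ ((j+1:ℕ):ℝ) := by exact_mod_cast Nat.succ_le_succ (Nat.zero_le j)
            nlinarith [h0j]
          linarith
        have hΓ0 : Real.Gamma ((υ:ℝ) * j + χ + 1) ≠ 0 := (Real.Gamma_pos_of_pos hg0).ne'
        have hΓT : Real.Gamma ((υ:ℝ) * t + χ + 1) ≠ 0 := (Real.Gamma_pos_of_pos hgT).ne'
        have e2 : w ^ (χ + (υ:ℝ) * (j:ℝ)) = w ^ χ * w ^ (υ * j) := by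
          rw [show χ + (υ:ℝ) * (j:ℝ) = χ + ((υ*j : ℕ):ℝ) by push_cast; ring,
            Real.rpow_add hw, Real.rpow_natCast]
        rw [show χ + (υ:ℝ) * ↑(j+1) - ↑υ = χ + (υ:ℝ) * ↑j by push_cast; ring, e2, hQ, ← hP]
        have hc1 : ((υ * (j+1) : ℕ):ℝ) = (υ:ℝ) * ((j+1:ℕ):ℝ) := by push_cast; ring
        rw [hc1, hfac, pow_succ]
        have hfne : (t.factorial : ℝ) ≠ 0 := Nat.cast_ne_zero.mpr (Nat.factorial_ne_zero t)
        have ht1 : ((t:ℝ) + 1) ≠ 0 := by positivity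
        push_cast at hch hQpos ⊢
        field_simp [hΓ0, hQpos.ne', hfne, ht1]
        linear_combination (∏ x ∈ Finset.range υ, ((υ:ℝ) * (↑t + 1 - 1) + χ + 1 + ↑x)) * hch
end

section
/- The Konhauser polynomials Z_s^{(χ)}(w;υ) and Y_n^{(χ)}(w;υ) satisfy the biorthogonality relation ∫_0^∞ e^{-w} w^χ Z_s^{(χ)}(w;υ) Y_n^{(χ)}(w;υ) dw = (Γ(υs+χ+1)/s!) δ_{n,s} for χ > -1 and positive integer υ. -/
open Real MeasureTheory Finset

lemma alt_sum_real (t : ℕ) : ∑ i ∈ range (t+1), (-1:ℝ)^i * (t.choose i) = if t = 0 then 1 else 0 := by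
  have h := @Int.alternating_sum_range_choose t
  have h2 := congrArg (fun z : ℤ => (z : ℝ)) h
  push_cast at h2
  split_ifs with ht
  · subst ht; simp
  · simpa [ht] using h2

lemma sum_alt_choose_mul (k j : ℕ) :
    ∑ m ∈ range (k+1), (-1:ℝ)^m * (k.choose m : ℝ) * (m.choose j : ℝ)
      = (-1:ℝ)^k * if j = k then 1 else 0 := by
  rcases lt_or_ge k j with hkj | hjk
  · rw [Finset.sum_eq_zero fun m hm => by
      simp only [mem_range] at hm
      rw [Nat.choose_eq_zero_of_lt (show m < j by omega)]; ring]
    rw [if_neg (by omega), mul_zero]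
  · have h1 : ∑ m ∈ range (k+1), (-1:ℝ)^m * (k.choose m : ℝ) * (m.choose j : ℝ)
        = ∑ m ∈ Ico j (k+1), (-1:ℝ)^m * (k.choose m : ℝ) * (m.choose j : ℝ) := by
      refine (Finset.sum_subset ?_ ?_).symm
      · intro m hm; simp only [mem_Ico, mem_range] at *; omega
      · intro m hm1 hm2
        simp only [mem_Ico, mem_range] at *
        rw [Nat.choose_eq_zero_of_lt (show m < j by omega)]; ring
    rw [h1, Finset.sum_Ico_eq_sum_range]
    have h2 : k + 1 - j = (k - j) + 1 := by omega
    rw [h2]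
    have h3 : ∀ i ∈ range ((k-j)+1), (-1:ℝ)^(j+i) * (k.choose (j+i) : ℝ) * ((j+i).choose j : ℝ)
        = ((-1:ℝ)^j * (k.choose j : ℝ)) * ((-1:ℝ)^i * ((k-j).choose i : ℝ)) := by
      intro i hi
      simp only [mem_range] at hi
      have hc : k.choose (j+i) * (j+i).choose j = k.choose j * (k-j).choose i := by
        have := Nat.choose_mul (n := k) (show j ≤ j + i by omega)
        simpa [Nat.add_sub_cancel_left] using this
      have hc' : (k.choose (j+i) : ℝ) * ((j+i).choose j : ℝ) = (k.choose j : ℝ) * ((k-j).choose i : ℝ) := by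
        exact_mod_cast congrArg (Nat.cast : ℕ → ℝ) hc
      calc (-1:ℝ)^(j+i) * (k.choose (j+i) : ℝ) * ((j+i).choose j : ℝ)
          = (-1:ℝ)^j * (-1:ℝ)^i * ((k.choose (j+i) : ℝ) * ((j+i).choose j : ℝ)) := by
            rw [pow_add]; ring
        _ = _ := by rw [hc']; ring
    rw [Finset.sum_congr rfl h3, ← Finset.mul_sum, alt_sum_real]
    rcases eq_or_lt_of_le hjk with h | h
    · subst h; simp
    · rw [if_neg (by omega), if_neg (by omega), mul_zero, mul_zero]

lemma neg_one_sq_pow (j : ℕ) : (-1:ℝ)^j * (-1:ℝ)^j = 1 := by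
  rw [← pow_add]
  exact (neg_one_pow_eq_one_iff_even (by norm_num)).2 ⟨j, rfl⟩

lemma binom_inv (f : ℕ → ℝ) (k : ℕ) :
    ∑ m ∈ range (k+1), (k.choose m : ℝ) *
        ∑ j ∈ range (m+1), (-1:ℝ)^(m-j) * (m.choose j : ℝ) * f j = f k := by
  have step1 : ∀ m ∈ range (k+1),
      (k.choose m : ℝ) * ∑ j ∈ range (m+1), (-1:ℝ)^(m-j) * (m.choose j : ℝ) * f j
        = ∑ j ∈ range (k+1), ((-1:ℝ)^m * (k.choose m : ℝ) * (m.choose j : ℝ)) * ((-1:ℝ)^j * f j) := by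
    intro m hm
    have hm' : m < k + 1 := mem_range.mp hm
    rw [Finset.mul_sum]
    have e1 : ∑ j ∈ range (m+1), (k.choose m : ℝ) * ((-1:ℝ)^(m-j) * (m.choose j : ℝ) * f j)
        = ∑ j ∈ range (k+1), (k.choose m : ℝ) * ((-1:ℝ)^(m-j) * (m.choose j : ℝ) * f j) := by
      refine Finset.sum_subset (fun j hj => mem_range.mpr (by have := mem_range.mp hj; omega)) ?_
      intro j hj1 hj2
      have : m < j := by
        have := mem_range.mp hj1
        by_contra h
        exact hj2 (mem_range.mpr (by omega))
      rw [Nat.choose_eq_zero_of_lt this]; ring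
    rw [e1]
    refine Finset.sum_congr rfl fun j hj => ?_
    rcases le_or_gt j m with hjm | hjm
    · have h1 : (-1:ℝ)^(m-j) * ((-1:ℝ)^j * (-1:ℝ)^j) = (-1:ℝ)^m * (-1:ℝ)^j := by
        have he : m - j + (j + j) = m + j := by omega
        rw [← pow_add, ← pow_add, he, pow_add]
      rw [neg_one_sq_pow, mul_one] at h1
      rw [h1]; ring
    · rw [Nat.choose_eq_zero_of_lt hjm]; ring
  rw [Finset.sum_congr rfl step1, Finset.sum_comm]
  have step2 : ∀ j ∈ range (k+1),
      ∑ m ∈ range (k+1), ((-1:ℝ)^m * (k.choose m : ℝ) * (m.choose j : ℝ)) * ((-1:ℝ)^j * f j)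
        = if j = k then (-1:ℝ)^k * ((-1:ℝ)^j * f j) else 0 := by
    intro j _
    rw [← Finset.sum_mul, sum_alt_choose_mul]
    split_ifs <;> ring
  rw [Finset.sum_congr rfl step2,
    Finset.sum_ite_eq' (range (k+1)) k (fun j => (-1:ℝ)^k * ((-1:ℝ)^j * f j)),
    if_pos (mem_range.mpr (by omega)), ← mul_assoc, neg_one_sq_pow, one_mul]

lemma prod_cast_desc (k m : ℕ) : ∏ i ∈ range m, ((k:ℝ) - i) = (k.descFactorial m : ℝ) := by
  induction m with
  | zero => simp
  | succ m ih =>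
    rw [Finset.prod_range_succ, ih, Nat.descFactorial_succ, Nat.cast_mul]
    rcases le_or_gt m k with h | h
    · rw [Nat.cast_sub h]; ring
    · rw [Nat.descFactorial_eq_zero_iff_lt.2 h]
      simp [Nat.sub_eq_zero_of_le h.le]

open Polynomial in
lemma newton_interp (p : Polynomial ℝ) (n : ℕ) (hp : p.degree < (n+1 : ℕ)) (x : ℝ) :
    p.eval x = ∑ m ∈ range (n+1), ((∏ i ∈ range m, (x - (i:ℝ))) / m.factorial) *
       ∑ j ∈ range (m+1), (-1:ℝ)^(m-j) * (m.choose j : ℝ) * p.eval (j:ℝ) := by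
  set d : ℕ → ℝ := fun m =>
    (∑ j ∈ range (m+1), (-1:ℝ)^(m-j) * (m.choose j : ℝ) * p.eval (j:ℝ)) / m.factorial with hd
  set q : Polynomial ℝ :=
    ∑ m ∈ range (n+1), Polynomial.C (d m) * ∏ i ∈ range m, (X - Polynomial.C (i:ℝ)) with hq
  have hqeval : ∀ y : ℝ, q.eval y = ∑ m ∈ range (n+1), d m * ∏ i ∈ range m, (y - (i:ℝ)) := by
    intro y
    rw [hq, Polynomial.eval_finset_sum]
    refine Finset.sum_congr rfl fun m _ => ?_
    rw [Polynomial.eval_mul, Polynomial.eval_C, Polynomial.eval_prod]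
    simp
  have hqdeg : q.degree < (n+1 : ℕ) := by
    refine lt_of_le_of_lt (Polynomial.degree_sum_le _ _) ?_
    rw [Finset.sup_lt_iff (by exact_mod_cast WithBot.bot_lt_coe (n+1))]
    intro m hm
    have h1 : (Polynomial.C (d m) * ∏ i ∈ range m, (X - Polynomial.C (i:ℝ))).degree
        ≤ (m : WithBot ℕ) := by
      refine le_trans (Polynomial.degree_mul_le _ _) ?_
      have h2 : (∏ i ∈ range m, (X - Polynomial.C (i:ℝ))).degree = (m : WithBot ℕ) := by
        rw [Polynomial.degree_prod,
          Finset.sum_congr rfl (fun i _ => Polynomial.degree_X_sub_C ((i:ℕ):ℝ))]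
        simp
      rw [h2]
      refine le_trans (add_le_add Polynomial.degree_C_le le_rfl) (by rw [zero_add])
    refine lt_of_le_of_lt h1 ?_
    have := mem_range.mp hm
    exact_mod_cast Nat.cast_lt.mpr this
  have key : p = q := by
    refine Polynomial.eq_of_degrees_lt_of_eval_finset_eq
      ((range (n+1)).image (Nat.cast : ℕ → ℝ)) ?_ ?_ ?_
    · rwa [Finset.card_image_of_injective _ Nat.cast_injective, Finset.card_range]
    · rwa [Finset.card_image_of_injective _ Nat.cast_injective, Finset.card_range]
    · intro y hy
      obtain ⟨k, hk, rfl⟩ := Finset.mem_image.mp hy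
      have hk' : k < n + 1 := mem_range.mp hk
      rw [hqeval]
      have e1 : ∀ m ∈ range (n+1), d m * ∏ i ∈ range m, ((k:ℝ) - i)
          = (k.choose m : ℝ) *
            ∑ j ∈ range (m+1), (-1:ℝ)^(m-j) * (m.choose j : ℝ) * p.eval (j:ℝ) := by
        intro m _
        rw [prod_cast_desc, Nat.descFactorial_eq_factorial_mul_choose, hd]
        push_cast
        have hfac : (m.factorial : ℝ) ≠ 0 := by exact_mod_cast m.factorial_ne_zero
        field_simp
      rw [Finset.sum_congr rfl e1]
      -- restrict from range (n+1) to range (k+1)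
      have e2 : ∑ m ∈ range (n+1), (k.choose m : ℝ) *
            ∑ j ∈ range (m+1), (-1:ℝ)^(m-j) * (m.choose j : ℝ) * p.eval (j:ℝ)
          = ∑ m ∈ range (k+1), (k.choose m : ℝ) *
            ∑ j ∈ range (m+1), (-1:ℝ)^(m-j) * (m.choose j : ℝ) * p.eval (j:ℝ) := by
        refine (Finset.sum_subset (fun m hm => mem_range.mpr (by have := mem_range.mp hm; omega)) ?_).symm
        intro m hm1 hm2
        have : k < m := by
          have := mem_range.mp hm1
          by_contra h
          exact hm2 (mem_range.mpr (by omega))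
        rw [Nat.choose_eq_zero_of_lt this, Nat.cast_zero, zero_mul]
      rw [e2, binom_inv (fun j => p.eval (j:ℝ)) k]
  calc p.eval x = q.eval x := by rw [key]
    _ = ∑ m ∈ range (n+1), d m * ∏ i ∈ range m, (x - (i:ℝ)) := hqeval x
    _ = _ := by
      refine Finset.sum_congr rfl fun m _ => ?_
      rw [hd]
      ring

open Polynomial in
lemma keyA (c : ℝ) (υ : ℕ) (hυ : 0 < υ) (n : ℕ) (x : ℝ) :
    ∑ m ∈ range (n+1), poch x m / m.factorial *
        ∑ j ∈ range (m+1), (-1:ℝ)^j * (m.choose j : ℝ) * poch ((c + j + 1)/υ) n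
      = poch ((c + 1 - x)/υ) n := by
  have hυ' : ((υ:ℝ)) ≠ 0 := Nat.cast_ne_zero.mpr hυ.ne'
  set p : Polynomial ℝ :=
    ∏ i ∈ range n, (Polynomial.C (1/(υ:ℝ)) * X + Polynomial.C ((c+1+υ*i)/υ)) with hpdef
  have hpdeg : p.degree < (n+1 : ℕ) := by
    rw [hpdef, Polynomial.degree_prod,
      Finset.sum_congr rfl (fun i _ => Polynomial.degree_linear (one_div_ne_zero hυ'))]
    simp
    exact_mod_cast Nat.lt_succ_self n
  have hpeval : ∀ y : ℝ, p.eval y = ∏ i ∈ range n, ((c + 1 + y + υ*i)/υ) := by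
    intro y
    rw [hpdef, Polynomial.eval_prod]
    refine Finset.prod_congr rfl fun i _ => ?_
    simp only [Polynomial.eval_add, Polynomial.eval_mul, Polynomial.eval_C, Polynomial.eval_X]
    field_simp
    ring
  have hpj : ∀ j : ℕ, p.eval ((j:ℕ):ℝ) = poch ((c + j + 1)/υ) n := by
    intro j
    rw [hpeval, poch]
    refine Finset.prod_congr rfl fun i _ => ?_
    field_simp
    ring
  have hpx : p.eval (-x) = poch ((c + 1 - x)/υ) n := by
    rw [hpeval, poch]
    refine Finset.prod_congr rfl fun i _ => ?_
    field_simp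
    ring
  have h := newton_interp p n hpdeg (-x)
  rw [hpx] at h
  rw [h]
  refine Finset.sum_congr rfl fun m _ => ?_
  have hprod : ∏ i ∈ range m, (-x - (i:ℝ)) = (-1:ℝ)^m * poch x m := by
    have h0 : ∏ i ∈ range m, (-x - (i:ℝ)) = ∏ i ∈ range m, ((-1:ℝ) * (x + i)) :=
      Finset.prod_congr rfl fun i _ => by ring
    rw [h0, Finset.prod_mul_distrib, Finset.prod_const, Finset.card_range, poch]
  rw [hprod]
  have hinner : ∑ j ∈ range (m+1), (-1:ℝ)^(m-j) * (m.choose j : ℝ) * p.eval ((j:ℕ):ℝ)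
      = (-1:ℝ)^m * ∑ j ∈ range (m+1), (-1:ℝ)^j * (m.choose j : ℝ) * poch ((c + j + 1)/υ) n := by
    rw [Finset.mul_sum]
    refine Finset.sum_congr rfl fun j hj => ?_
    have hjm : j ≤ m := by have := mem_range.mp hj; omega
    rw [hpj j]
    have h1 : (-1:ℝ)^(m-j) = (-1:ℝ)^m * (-1:ℝ)^j := by
      have he : m - j + (j + j) = m + j := by omega
      have h2 : (-1:ℝ)^(m-j) * ((-1:ℝ)^j * (-1:ℝ)^j) = (-1:ℝ)^m * (-1:ℝ)^j := by
        rw [← pow_add, ← pow_add, he, pow_add]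
      rwa [neg_one_sq_pow, mul_one] at h2
    rw [h1]; ring
  rw [hinner]
  set S := ∑ j ∈ range (m+1), (-1:ℝ)^j * (m.choose j : ℝ) * poch ((c + j + 1)/υ) n with hS
  have h2 := neg_one_sq_pow m
  rw [show (-1:ℝ)^m * poch x m / (m.factorial : ℝ) * ((-1:ℝ)^m * S)
      = ((-1:ℝ)^m * (-1:ℝ)^m) * (poch x m / (m.factorial : ℝ) * S) by ring, h2, one_mul]

lemma delta_sum (s n : ℕ) :
    ∑ l ∈ range (s+1), (-1:ℝ)^l * (s.choose l : ℝ) * poch (-(l:ℝ)) n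
      = (n.factorial : ℝ) * (if n = s then 1 else 0) := by
  have hpoch : ∀ l : ℕ, poch (-(l:ℝ)) n = (-1:ℝ)^n * (n.factorial : ℝ) * (l.choose n : ℝ) := by
    intro l
    rw [poch]
    have h1 : ∏ i ∈ range n, (-(l:ℝ) + i) = (-1:ℝ)^n * ∏ i ∈ range n, ((l:ℝ) - i) := by
      have h0 : ∏ i ∈ range n, (-(l:ℝ) + i) = ∏ i ∈ range n, ((-1:ℝ) * ((l:ℝ) - i)) :=
        Finset.prod_congr rfl fun i _ => by ring
      rw [h0, Finset.prod_mul_distrib, Finset.prod_const, Finset.card_range]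
    rw [h1, prod_cast_desc, Nat.descFactorial_eq_factorial_mul_choose]
    push_cast
    ring
  rw [Finset.sum_congr rfl fun l _ => by rw [hpoch l]]
  have h2 : ∑ l ∈ range (s+1), (-1:ℝ)^l * (s.choose l : ℝ) * ((-1:ℝ)^n * (n.factorial : ℝ) * (l.choose n : ℝ))
      = ((-1:ℝ)^n * (n.factorial : ℝ)) * ∑ l ∈ range (s+1), (-1:ℝ)^l * (s.choose l : ℝ) * (l.choose n : ℝ) := by
    rw [Finset.mul_sum]
    exact Finset.sum_congr rfl fun l _ => by ring
  rw [h2, sum_alt_choose_mul s n]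
  split_ifs with h
  · subst h
    simp only [mul_one]
    linear_combination (n.factorial : ℝ) * neg_one_sq_pow n
  · ring

lemma Gamma_poch (x : ℝ) (hx : 0 < x) (m : ℕ) :
    Real.Gamma (x + m) = Real.Gamma x * poch x m := by
  induction m with
  | zero => simp [poch]
  | succ m ih =>
    have hxm : x + m ≠ 0 := by positivity
    have hcast : x + ((m:ℕ)+1:ℕ) = (x + m) + 1 := by push_cast; ring
    have hp : poch x (m+1) = poch x m * (x + m) := by
      rw [poch, poch, Finset.prod_range_succ]
    rw [hcast, Real.Gamma_add_one hxm, ih, hp]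
    ring

lemma integrable_exp_rpow_pow (c : ℝ) (hc : -1 < c) (k : ℕ) :
    IntegrableOn (fun w : ℝ => Real.exp (-w) * w ^ c * w ^ k) (Set.Ioi (0:ℝ)) := by
  have h : 0 < c + k + 1 := by
    have : (0:ℝ) ≤ k := Nat.cast_nonneg k
    linarith
  refine (Real.GammaIntegral_convergent h).congr_fun ?_ measurableSet_Ioi
  intro w hw
  have hw' : (0:ℝ) < w := hw
  show Real.exp (-w) * w ^ (c + (k:ℝ) + 1 - 1) = Real.exp (-w) * w ^ c * w ^ k
  rw [show c + (k:ℝ) + 1 - 1 = c + k by ring, Real.rpow_add hw', Real.rpow_natCast]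
  ring

lemma integral_exp_rpow_pow (c : ℝ) (hc : -1 < c) (k : ℕ) :
    ∫ w in Set.Ioi (0:ℝ), Real.exp (-w) * w ^ c * w ^ k = Real.Gamma (c + k + 1) := by
  have h : 0 < c + k + 1 := by
    have : (0:ℝ) ≤ k := Nat.cast_nonneg k
    linarith
  rw [Real.Gamma_eq_integral h]
  refine setIntegral_congr_fun measurableSet_Ioi fun w hw => ?_
  have hw' : (0:ℝ) < w := hw
  show Real.exp (-w) * w ^ c * w ^ k = Real.exp (-w) * w ^ (c + (k:ℝ) + 1 - 1)
  rw [show c + (k:ℝ) + 1 - 1 = c + k by ring, Real.rpow_add hw', Real.rpow_natCast]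
  ring

theorem konhauser_biorthogonality (χ : ℝ) (hχ : χ > -1) (υ : ℕ) (hυ : 0 < υ) (s n : ℕ) :
    ∫ w in Set.Ioi (0 : ℝ), Real.exp (-w) * w ^ χ * konZ s χ υ w * konY n χ υ w =
      if n = s then Real.Gamma ((υ : ℝ) * (s : ℝ) + χ + 1) / s.factorial else 0 := by
  set A : ℝ := Real.Gamma ((υ : ℝ) * (s : ℝ) + χ + 1) / s.factorial with hA
  set inn : ℕ → ℝ := fun m =>
    ∑ j ∈ Finset.range (m + 1),
      (-1 : ℝ) ^ j * (m.choose j : ℝ) * poch ((χ + (j : ℝ) + 1) / (υ : ℝ)) n with hinn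
  set c : ℕ → ℕ → ℝ := fun l m =>
    A * ((-1:ℝ)^l * (s.choose l : ℝ) / Real.Gamma ((υ:ℝ)*(l:ℝ)+χ+1)) *
      ((1:ℝ)/(n.factorial:ℝ) * ((1:ℝ)/(m.factorial:ℝ) * inn m)) with hc
  have hexp : (fun w : ℝ => Real.exp (-w) * w ^ χ * konZ s χ υ w * konY n χ υ w)
      = fun w : ℝ => ∑ l ∈ range (s+1), ∑ m ∈ range (n+1),
          c l m * (Real.exp (-w) * w ^ χ * w ^ (υ*l+m)) := by
    funext w
    rw [konZ, konY]
    have hinn' : ∀ m : ℕ, (∑ j ∈ range (m+1),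
        (-1:ℝ)^j * (m.choose j : ℝ) * poch ((χ + (j:ℝ) + 1)/(υ:ℝ)) n) = inn m := fun m => rfl
    simp only [hinn']
    simp only [hc, hA]
    simp only [Finset.mul_sum, Finset.sum_mul]
    rw [Finset.sum_comm]
    refine Finset.sum_congr rfl fun l _ => Finset.sum_congr rfl fun m _ => ?_
    rw [pow_add]
    ring
  rw [hexp]
  have hint : ∀ l ∈ range (s+1), ∀ m ∈ range (n+1),
      Integrable (fun w : ℝ => c l m * (Real.exp (-w) * w ^ χ * w ^ (υ*l+m)))
        (volume.restrict (Set.Ioi (0:ℝ))) :=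
    fun l _ m _ => (integrable_exp_rpow_pow χ hχ (υ*l+m)).const_mul _
  rw [MeasureTheory.integral_finset_sum _
    (fun l hl => integrable_finset_sum _ (fun m hm => hint l hl m hm))]
  have h2 : ∀ l ∈ range (s+1),
      (∫ w in Set.Ioi (0:ℝ), ∑ m ∈ range (n+1),
          c l m * (Real.exp (-w) * w ^ χ * w ^ (υ*l+m)))
        = ∑ m ∈ range (n+1), c l m * Real.Gamma (χ + (↑(υ*l+m):ℝ) + 1) := by
    intro l hl
    rw [MeasureTheory.integral_finset_sum _ (fun m hm => hint l hl m hm)]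
    refine Finset.sum_congr rfl fun m hm => ?_
    rw [MeasureTheory.integral_const_mul, integral_exp_rpow_pow χ hχ (υ*l+m)]
  rw [Finset.sum_congr rfl h2]
  have hl : ∀ l ∈ range (s+1),
      ∑ m ∈ range (n+1), c l m * Real.Gamma (χ + (↑(υ*l+m):ℝ) + 1)
        = A / n.factorial * ((-1:ℝ)^l * (s.choose l : ℝ) * poch (-(l:ℝ)) n) := by
    intro l _
    have hx : (0:ℝ) < (υ:ℝ)*(l:ℝ) + χ + 1 := by
      have h0 : (0:ℝ) ≤ (υ:ℝ)*(l:ℝ) := by positivity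
      linarith
    have hΓ : Real.Gamma ((υ:ℝ)*(l:ℝ)+χ+1) ≠ 0 := (Real.Gamma_pos_of_pos hx).ne'
    have hG : ∀ m ∈ range (n+1),
        c l m * Real.Gamma (χ + (↑(υ*l+m):ℝ) + 1)
          = (A / n.factorial * ((-1:ℝ)^l * (s.choose l : ℝ))) *
            (poch ((υ:ℝ)*(l:ℝ)+χ+1) m / m.factorial * inn m) := by
      intro m _
      rw [show χ + (↑(υ*l+m):ℝ) + 1 = ((υ:ℝ)*(l:ℝ)+χ+1) + (m:ℝ) by push_cast; ring,
        Gamma_poch _ hx m, hc]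
      field_simp
    rw [Finset.sum_congr rfl hG, ← Finset.mul_sum]
    have hk := keyA χ υ hυ n ((υ:ℝ)*(l:ℝ)+χ+1)
    rw [hinn]
    rw [hk]
    have he : (χ + 1 - ((υ:ℝ)*(l:ℝ)+χ+1))/(υ:ℝ) = -(l:ℝ) := by
      have hυ' : ((υ:ℝ)) ≠ 0 := Nat.cast_ne_zero.mpr hυ.ne'
      field_simp
      ring
    rw [he]
    ring
  rw [Finset.sum_congr rfl hl, ← Finset.mul_sum, delta_sum s n]
  have hnfac : ((n.factorial : ℕ) : ℝ) ≠ 0 := by exact_mod_cast n.factorial_ne_zero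
  split_ifs with h
  · rw [mul_one]
    field_simp
  · rw [mul_zero, mul_zero]
end

section
/- For p > 1 and nonnegative integers s, n with s, n < (p-1)/2, the finite orthogonal polynomials N_s^{(p)} satisfy ∫_0^∞ w^{-p} e^{-1/w} N_s^{(p)}(w) N_n^{(p)}(w) dw = (s! Γ(p-s)/(p-2s-1)) δ_{n,s}. -/
open Real MeasureTheory Finset

-- Auxiliary lemmas
lemma momMeas (a : ℝ) : Measurable (fun w : ℝ => w ^ (-a - 1) * Real.exp (-1 / w)) := by
  fun_prop

lemma momInt {a : ℝ} (ha : 0 < a) :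
    IntegrableOn (fun w : ℝ => w ^ (-a - 1) * Real.exp (-1 / w)) (Set.Ioi 0) := by
  have hmeas := momMeas a
  have h2 : IntegrableOn (fun w : ℝ => w ^ (-a - 1) * Real.exp (-1 / w)) (Set.Ioi 1) := by
    refine Integrable.mono' (integrableOn_Ioi_rpow_of_lt (by linarith : -a - 1 < -1) one_pos)
      hmeas.aestronglyMeasurable ?_
    filter_upwards [ae_restrict_mem measurableSet_Ioi] with w hw
    have hw0 : (0:ℝ) < w := lt_trans one_pos hw
    have h1 : Real.exp (-1 / w) ≤ 1 := by
      rw [Real.exp_le_one_iff, neg_div]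
      exact neg_nonpos.2 (by positivity)
    have h0 : (0:ℝ) ≤ w ^ (-a - 1) := (Real.rpow_pos_of_pos hw0 _).le
    rw [Real.norm_eq_abs, abs_of_nonneg (by positivity)]
    nlinarith [Real.exp_pos (-1/w)]
  have h1 : IntegrableOn (fun w : ℝ => w ^ (-a - 1) * Real.exp (-1 / w)) (Set.Ioc 0 1) := by
    set m : ℕ := ⌈a + 1⌉₊ with hm
    refine Integrable.mono' (g := fun _ => (m.factorial : ℝ))
      (integrableOn_const measure_Ioc_lt_top.ne) hmeas.aestronglyMeasurable ?_
    filter_upwards [ae_restrict_mem measurableSet_Ioc] with w hw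
    obtain ⟨hw0, hw1⟩ := hw
    have hfacpos : (0:ℝ) < m.factorial := by positivity
    have hwm : (0:ℝ) < w ^ m := by positivity
    have hexp : Real.exp (-1 / w) ≤ (m.factorial : ℝ) * w ^ m := by
      have h3 := Real.pow_div_factorial_le_exp (x := 1/w) (by positivity) m
      rw [div_le_iff₀ hfacpos] at h3
      have h6 : (1:ℝ) = (1/w)^m * w^m := by
        rw [div_pow, one_pow, div_mul_cancel₀]; positivity
      have h7 : (1:ℝ) ≤ (m.factorial : ℝ) * w ^ m * Real.exp (1/w) := by
        calc (1:ℝ) = (1/w)^m * w^m := h6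
          _ ≤ Real.exp (1/w) * m.factorial * w ^ m := by nlinarith
          _ = (m.factorial : ℝ) * w ^ m * Real.exp (1/w) := by ring
      have h8 : Real.exp (-1/w) = 1 / Real.exp (1/w) := by
        rw [neg_div, Real.exp_neg, one_div]; rw [one_div]
      rw [h8, div_le_iff₀ (Real.exp_pos _)]
      linarith
    have hma : a + 1 ≤ (m : ℝ) := Nat.le_ceil _
    have hrp : w ^ (-a - 1) * (w:ℝ) ^ m ≤ 1 := by
      rw [← Real.rpow_natCast w m, ← Real.rpow_add hw0]
      exact Real.rpow_le_one hw0.le hw1 (by linarith)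
    rw [Real.norm_eq_abs, abs_of_nonneg (by positivity)]
    have h0 : (0:ℝ) < w ^ (-a - 1) := Real.rpow_pos_of_pos hw0 _
    calc w ^ (-a-1) * Real.exp (-1/w) ≤ w ^ (-a-1) * ((m.factorial:ℝ) * w ^ m) := by nlinarith
      _ = (m.factorial : ℝ) * (w ^ (-a-1) * w ^ m) := by ring
      _ ≤ (m.factorial : ℝ) * 1 := by nlinarith
      _ = _ := mul_one _
  have hu : Set.Ioi (0:ℝ) = Set.Ioc 0 1 ∪ Set.Ioi 1 := (Set.Ioc_union_Ioi_eq_Ioi zero_le_one).symm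
  rw [hu]
  exact h1.union h2

lemma mom {a : ℝ} (ha : 0 < a) :
    ∫ w in Set.Ioi (0:ℝ), w ^ (-a - 1) * Real.exp (-1 / w) = Real.Gamma a := by
  have h := integral_comp_rpow_Ioi (fun x => Real.exp (-x) * x ^ (a - 1)) (p := -1) (by norm_num)
  rw [Real.Gamma_eq_integral ha, ← h]
  refine setIntegral_congr_fun measurableSet_Ioi (fun x hx => ?_)
  have hx0 : (0:ℝ) < x := hx
  simp only [Real.rpow_neg_one, smul_eq_mul]
  rw [Real.inv_rpow hx0.le, ← Real.rpow_neg hx0.le]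
  rw [show |(-1:ℝ)| = 1 from by norm_num, one_mul]
  rw [show Real.exp (-x⁻¹) = Real.exp (-1/x) from by rw [neg_div, one_div]]
  rw [mul_comm (Real.exp (-1/x)) (x ^ (-(a-1))), ← mul_assoc, ← Real.rpow_add hx0]
  norm_num
  ring_nf

lemma poch_zero (a : ℝ) : poch a 0 = 1 := by simp [poch]

lemma poch_succ (a : ℝ) (n : ℕ) : poch a (n + 1) = poch a n * (a + n) := by
  simp [poch, Finset.prod_range_succ]

lemma poch_succ_left (a : ℝ) (n : ℕ) : poch a (n + 1) = a * poch (a + 1) n := by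
  rw [poch, Finset.prod_range_succ']
  rw [Nat.cast_zero, add_zero, mul_comm]
  congr 1
  refine Finset.prod_congr rfl fun i _ => ?_
  push_cast; ring

lemma poch_vandermonde (x y : ℝ) (s : ℕ) :
    ∑ k ∈ Finset.range (s + 1), (s.choose k : ℝ) * poch x k * poch y (s - k) = poch (x + y) s := by
  induction s with
  | zero => simp [poch_zero]
  | succ s ih =>
    have peel2 : ∑ k ∈ Finset.range (s+1), (s.choose k : ℝ) * poch x k * poch y (s+1-k)
        = ∑ k ∈ Finset.range s, (s.choose (k+1):ℝ) * poch x (k+1) * poch y (s-(k+1)+1)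
          + poch y (s+1) := by
      rw [Finset.sum_range_succ' (fun k => (s.choose k : ℝ) * poch x k * poch y (s+1-k))]
      congr 1
      · refine Finset.sum_congr rfl fun k hk => ?_
        have h : s + 1 - (k+1) = s - (k+1) + 1 := by
          have := Finset.mem_range.1 hk; omega
        rw [h]
      · simp [poch_zero]
    have hB : ∑ k ∈ Finset.range (s+1), (s.choose (k+1) : ℝ) * poch x (k+1) * poch y (s-k)
          + poch y (s+1)
        = ∑ k ∈ Finset.range (s+1), (s.choose k : ℝ) * poch x k * poch y (s+1-k) := by
      rw [peel2, Finset.sum_range_succ]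
      simp only [Nat.choose_succ_self, Nat.cast_zero, zero_mul, add_zero]
      congr 1
      refine Finset.sum_congr rfl fun k hk => ?_
      have h : s - (k+1) + 1 = s - k := by
        have := Finset.mem_range.1 hk; omega
      rw [h]
    calc ∑ k ∈ Finset.range (s + 2), ((s+1).choose k : ℝ) * poch x k * poch y (s + 1 - k)
        = (∑ k ∈ Finset.range (s+1),
            ((s.choose k : ℝ) * poch x (k+1) * poch y (s-k)
              + (s.choose (k+1) : ℝ) * poch x (k+1) * poch y (s-k)))
          + poch y (s+1) := by
          rw [Finset.sum_range_succ' (fun k => ((s+1).choose k : ℝ) * poch x k * poch y (s+1-k))]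
          congr 1
          · refine Finset.sum_congr rfl fun k hk => ?_
            rw [Nat.choose_succ_succ]
            have : s + 1 - (k+1) = s - k := by omega
            rw [this]
            push_cast; ring
          · simp [poch_zero]
      _ = ∑ k ∈ Finset.range (s+1), (s.choose k : ℝ) * poch x (k+1) * poch y (s-k)
          + (∑ k ∈ Finset.range (s+1), (s.choose (k+1) : ℝ) * poch x (k+1) * poch y (s-k)
             + poch y (s+1)) := by rw [Finset.sum_add_distrib]; ring
      _ = ∑ k ∈ Finset.range (s+1), (s.choose k : ℝ) * poch x (k+1) * poch y (s-k)
          + ∑ k ∈ Finset.range (s+1), (s.choose k : ℝ) * poch x k * poch y (s+1-k) := by rw [hB]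
      _ = ∑ k ∈ Finset.range (s+1),
            (s.choose k : ℝ) * poch x k * poch y (s-k) * (x + y + s) := by
          rw [← Finset.sum_add_distrib]
          refine Finset.sum_congr rfl fun k hk => ?_
          have hks : k ≤ s := by have := Finset.mem_range.1 hk; omega
          have h1 : s + 1 - k = (s - k) + 1 := by omega
          have h2 : ((s - k : ℕ) : ℝ) = (s:ℝ) - (k:ℝ) := by
            rw [Nat.cast_sub hks]
          rw [poch_succ, h1, poch_succ, h2]
          ring
      _ = poch (x + y) (s + 1) := by
          rw [poch_succ, ← ih, Finset.sum_mul]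

lemma Gamma_add_nat {a : ℝ} (ha : 0 < a) (m : ℕ) :
    Real.Gamma (a + m) = Real.Gamma a * poch a m := by
  induction m with
  | zero => simp [poch_zero]
  | succ m ih =>
    have h1 : a + (m + 1 : ℕ) = (a + m) + 1 := by push_cast; ring
    rw [h1, Real.Gamma_add_one (by positivity), ih, poch_succ]
    ring

/-- reversed product form of poch -/
lemma poch_reflect (c : ℝ) (s : ℕ) :
    ∏ i ∈ Finset.range s, (c + (s:ℝ) - 1 - i) = poch c s := by
  induction s with
  | zero => simp [poch_zero]
  | succ s ih =>
    rw [Finset.prod_range_succ' (fun i => c + ((s+1:ℕ):ℝ) - 1 - i), poch_succ]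
    congr 1
    · rw [← ih]
      refine Finset.prod_congr rfl fun i _ => ?_
      push_cast; ring
    · push_cast; ring

/-- poch (-j) s = 0 when j < s -/
lemma poch_neg_eq_zero {j s : ℕ} (h : j < s) : poch (-(j:ℝ)) s = 0 :=
  Finset.prod_eq_zero (Finset.mem_range.2 h) (by push_cast; ring)

/-- poch (-s) s = (-1)^s s! -/
lemma poch_neg_self (s : ℕ) : poch (-(s:ℝ)) s = (-1:ℝ)^s * s.factorial := by
  have h1 : poch (-(s:ℝ)) s = ∏ i ∈ Finset.range s, ((-1) * ((s:ℝ) - i)) := by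
    refine Finset.prod_congr rfl fun i _ => by push_cast; ring
  rw [h1, Finset.prod_mul_distrib, Finset.prod_const, Finset.card_range]
  congr 1
  have h2 : ∀ i ∈ Finset.range s, (s:ℝ) - i = ((s - 1 - i : ℕ) : ℝ) + 1 := by
    intro i hi
    have hi' := Finset.mem_range.1 hi
    have h4 : s - 1 - i = s - (1 + i) := by omega
    rw [h4, Nat.cast_sub (by omega)]
    push_cast; ring
  rw [Finset.prod_congr rfl h2]
  rw [Finset.prod_range_reflect (fun i => ((i : ℕ) : ℝ) + 1) s]
  rw_mod_cast [Finset.prod_range_add_one_eq_factorial]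

noncomputable def dco (s : ℕ) (p : ℝ) (k : ℕ) : ℝ :=
  (-1:ℝ)^(s+k) * (k.factorial : ℝ) * gchoose (p - (s:ℝ) - 1) k * (s.choose (s - k) : ℝ)

lemma finN_eq (s : ℕ) (p w : ℝ) :
    finN s p w = ∑ k ∈ Finset.range (s+1), dco s p k * w ^ k := by
  rw [finN, Finset.mul_sum]
  refine Finset.sum_congr rfl fun k _ => ?_
  rw [dco, neg_pow w k, pow_add]
  ring

lemma dco_eq {s k : ℕ} (hk : k ≤ s) (p : ℝ) :
    dco s p k = (-1:ℝ)^s * (s.choose k : ℝ) * poch ((s:ℝ) + 1 - p) k := by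
  have hkey : poch ((s:ℝ) + 1 - p) k = (-1:ℝ)^k * ∏ i ∈ Finset.range k, (p - (s:ℝ) - 1 - i) := by
    unfold poch
    rw [show (∏ i ∈ Finset.range k, ((s:ℝ) + 1 - p + i))
        = ∏ i ∈ Finset.range k, ((-1) * (p - (s:ℝ) - 1 - i)) from
      Finset.prod_congr rfl fun i _ => by ring]
    rw [Finset.prod_mul_distrib, Finset.prod_const, Finset.card_range]
  have hf : (k.factorial : ℝ) ≠ 0 := by positivity
  rw [dco, Nat.choose_symm hk, gchoose, hkey, pow_add]
  field_simp

lemma innerSum (p : ℝ) (s j : ℕ) (h : 0 < p - 1 - s - j) :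
    ∑ k ∈ Finset.range (s+1), dco s p k * Real.Gamma (p - 1 - k - j)
    = (-1:ℝ)^s * Real.Gamma (p - 1 - s - j) * poch (-(j:ℝ)) s := by
  have key : ∀ k ∈ Finset.range (s+1), dco s p k * Real.Gamma (p - 1 - k - j)
      = ((-1:ℝ)^s * Real.Gamma (p - 1 - s - j)) *
        ((s.choose k : ℝ) * poch ((s:ℝ)+1-p) k * poch (p-1-(s:ℝ)-(j:ℝ)) (s-k)) := by
    intro k hk
    have hks : k ≤ s := by have := Finset.mem_range.1 hk; omega
    have hG : Real.Gamma (p-1-(k:ℝ)-(j:ℝ))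
        = Real.Gamma (p-1-(s:ℝ)-(j:ℝ)) * poch (p-1-(s:ℝ)-(j:ℝ)) (s-k) := by
      rw [← Gamma_add_nat h (s-k)]
      congr 1
      rw [Nat.cast_sub hks]
      ring
    rw [dco_eq hks, hG]
    ring
  rw [Finset.sum_congr rfl key, ← Finset.mul_sum, poch_vandermonde]
  rw [show (s:ℝ)+1-p + (p-1-(s:ℝ)-(j:ℝ)) = -(j:ℝ) from by ring]

lemma dco_self (s : ℕ) (p : ℝ) : dco s p s = poch (p - 2*(s:ℝ)) s := by
  have h1 : ∏ i ∈ Finset.range s, (p - (s:ℝ) - 1 - i) = poch (p - 2*(s:ℝ)) s := by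
    rw [← poch_reflect (p - 2*(s:ℝ)) s]
    exact Finset.prod_congr rfl fun i _ => by ring
  rw [dco, Nat.sub_self, Nat.choose_zero_right, gchoose, h1]
  have h2 : (-1:ℝ)^(s+s) = 1 := by rw [← two_mul, pow_mul]; norm_num
  rw [h2, Nat.cast_one]
  have hf : (s.factorial : ℝ) ≠ 0 := by positivity
  field_simp

lemma Sval (p : ℝ) (s n : ℕ) (h : (s:ℝ) + n < p - 1) :
    ∑ k ∈ Finset.range (s+1), ∑ j ∈ Finset.range (n+1),
      (dco s p k * dco n p j) * Real.Gamma (p - 1 - k - j)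
    = if n = s then (s.factorial : ℝ) * Real.Gamma (p - (s:ℝ)) / (p - 2*(s:ℝ) - 1) else 0 := by
  by_cases hns : n = s
  · subst hns
    rw [if_pos rfl, Finset.sum_comm]
    have hstep : ∀ j ∈ Finset.range (n+1),
        ∑ k ∈ Finset.range (n+1), (dco n p k * dco n p j) * Real.Gamma (p - 1 - k - j)
        = dco n p j * (((-1:ℝ)^n * Real.Gamma (p-1-(n:ℝ)-(j:ℝ))) * poch (-(j:ℝ)) n) := by
      intro j hj
      have hjn : (j:ℝ) ≤ n := by
        have := Finset.mem_range.1 hj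
        exact_mod_cast Nat.lt_succ_iff.1 this
      have hpos : 0 < p - 1 - (n:ℝ) - (j:ℝ) := by linarith
      rw [show dco n p j * (((-1:ℝ)^n * Real.Gamma (p-1-(n:ℝ)-(j:ℝ))) * poch (-(j:ℝ)) n)
          = dco n p j * ((-1:ℝ)^n * Real.Gamma (p-1-(n:ℝ)-(j:ℝ)) * poch (-(j:ℝ)) n) from by ring]
      rw [← innerSum p n j hpos, Finset.mul_sum]
      exact Finset.sum_congr rfl fun k _ => by ring
    rw [Finset.sum_congr rfl hstep]
    rw [Finset.sum_eq_single_of_mem n (Finset.self_mem_range_succ n)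
      (fun j hj hjn => by
        have hlt : j < n := by
          have := Finset.mem_range.1 hj; omega
        rw [poch_neg_eq_zero hlt]
        ring)]
    rw [poch_neg_self, dco_self]
    have hpos2 : 0 < p - 2*(n:ℝ) - 1 := by linarith
    have hG : Real.Gamma (p - (n:ℝ))
        = Real.Gamma (p - 2*(n:ℝ) - 1) * ((p - 2*(n:ℝ) - 1) * poch (p - 2*(n:ℝ)) n) := by
      have h3 := Gamma_add_nat hpos2 (n+1)
      rw [show p - 2*(n:ℝ) - 1 + ((n+1 : ℕ):ℝ) = p - (n:ℝ) from by push_cast; ring] at h3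
      rw [h3, poch_succ_left]
      rw [show p - 2*(n:ℝ) - 1 + 1 = p - 2*(n:ℝ) from by ring]
    have h4 : (-1:ℝ)^n * (-1:ℝ)^n = 1 := by
      rw [← pow_add, ← two_mul, pow_mul]; norm_num
    rw [show p - 1 - (n:ℝ) - (n:ℝ) = p - 2*(n:ℝ) - 1 from by ring, hG,
      eq_div_iff (ne_of_gt hpos2)]
    linear_combination (poch (p - 2*(n:ℝ)) n * Real.Gamma (p - 2*(n:ℝ) - 1) *
      (n.factorial : ℝ) * (p - 2*(n:ℝ) - 1)) * h4
  · rw [if_neg hns]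
    rcases Nat.lt_or_ge n s with hlt | hge
    · rw [Finset.sum_comm]
      refine Finset.sum_eq_zero fun j hj => ?_
      have hjn : j ≤ n := Nat.lt_succ_iff.1 (Finset.mem_range.1 hj)
      have hjr : (j:ℝ) ≤ n := by exact_mod_cast hjn
      have hpos : 0 < p - 1 - (s:ℝ) - (j:ℝ) := by linarith
      have heq : ∑ k ∈ Finset.range (s+1), (dco s p k * dco n p j) * Real.Gamma (p - 1 - k - j)
          = dco n p j * ∑ k ∈ Finset.range (s+1), dco s p k * Real.Gamma (p - 1 - k - j) := by
        rw [Finset.mul_sum]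
        exact Finset.sum_congr rfl fun k _ => by ring
      rw [heq, innerSum p s j hpos, poch_neg_eq_zero (lt_of_le_of_lt hjn hlt)]
      ring
    · have hlt : s < n := by omega
      refine Finset.sum_eq_zero fun k hk => ?_
      have hks : k ≤ s := Nat.lt_succ_iff.1 (Finset.mem_range.1 hk)
      have hkr : (k:ℝ) ≤ s := by exact_mod_cast hks
      have hpos : 0 < p - 1 - (n:ℝ) - (k:ℝ) := by linarith
      have heq : ∑ j ∈ Finset.range (n+1), (dco s p k * dco n p j) * Real.Gamma (p - 1 - k - j)
          = dco s p k * ∑ j ∈ Finset.range (n+1), dco n p j * Real.Gamma (p - 1 - j - k) := by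
        rw [Finset.mul_sum]
        refine Finset.sum_congr rfl fun j _ => ?_
        rw [show p - 1 - (k:ℝ) - (j:ℝ) = p - 1 - (j:ℝ) - (k:ℝ) from by ring]
        ring
      rw [heq, innerSum p n k hpos, poch_neg_eq_zero (lt_of_le_of_lt hks hlt)]
      ring



theorem finN_orthogonality (p : ℝ) (hp : 1 < p) (s n : ℕ)
    (hs : (s : ℝ) < (p - 1) / 2) (hn : (n : ℝ) < (p - 1) / 2) :
    ∫ w in Set.Ioi (0 : ℝ), w ^ (-p) * Real.exp (-1 / w) * finN s p w * finN n p w =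
      if n = s then (s.factorial : ℝ) * Real.Gamma (p - (s : ℝ)) / (p - 2 * (s : ℝ) - 1)
      else 0 := by
  have hsn : (s:ℝ) + n < p - 1 := by linarith
  have hpos : ∀ k ∈ Finset.range (s+1), ∀ j ∈ Finset.range (n+1),
      0 < p - 1 - (k:ℝ) - (j:ℝ) := by
    intro k hk j hj
    have hk' : (k:ℝ) ≤ s := by exact_mod_cast Nat.lt_succ_iff.1 (Finset.mem_range.1 hk)
    have hj' : (j:ℝ) ≤ n := by exact_mod_cast Nat.lt_succ_iff.1 (Finset.mem_range.1 hj)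
    linarith
  have hpt : Set.EqOn
      (fun w => w ^ (-p) * Real.exp (-1/w) * finN s p w * finN n p w)
      (fun w => ∑ k ∈ Finset.range (s+1), ∑ j ∈ Finset.range (n+1),
          (dco s p k * dco n p j) * (w ^ (-(p - 1 - (k:ℝ) - (j:ℝ)) - 1) * Real.exp (-1/w)))
      (Set.Ioi 0) := by
    intro w hw
    have hw0 : (0:ℝ) < w := hw
    simp only
    have hsplit : w ^ (-p) * Real.exp (-1/w) * finN s p w * finN n p w
        = (w ^ (-p) * Real.exp (-1/w)) *
          ∑ k ∈ Finset.range (s+1), ∑ j ∈ Finset.range (n+1),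
            (dco s p k * w ^ k) * (dco n p j * w ^ j) := by
      rw [finN_eq, finN_eq, ← Finset.sum_mul_sum]
      ring
    rw [hsplit, Finset.mul_sum]
    refine Finset.sum_congr rfl fun k hk => ?_
    rw [Finset.mul_sum]
    refine Finset.sum_congr rfl fun j hj => ?_
    have hpow : w ^ (-(p - 1 - (k:ℝ) - (j:ℝ)) - 1) = w ^ (k:ℕ) * w ^ (j:ℕ) * w ^ (-p) := by
      rw [← Real.rpow_natCast w k, ← Real.rpow_natCast w j, ← Real.rpow_add hw0,
        ← Real.rpow_add hw0]
      congr 1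
      ring
    rw [hpow]
    ring
  rw [MeasureTheory.setIntegral_congr_fun measurableSet_Ioi hpt]
  have hint : ∀ k ∈ Finset.range (s+1), ∀ j ∈ Finset.range (n+1),
      Integrable (fun w => (dco s p k * dco n p j) *
        (w ^ (-(p - 1 - (k:ℝ) - (j:ℝ)) - 1) * Real.exp (-1/w)))
        (volume.restrict (Set.Ioi 0)) := fun k hk j hj =>
    (momInt (hpos k hk j hj)).const_mul _
  rw [MeasureTheory.integral_finset_sum _
    (fun k hk => integrable_finset_sum _ (fun j hj => hint k hk j hj))]
  have heval : ∀ k ∈ Finset.range (s+1),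
      (∫ w in Set.Ioi (0:ℝ), ∑ j ∈ Finset.range (n+1),
        (dco s p k * dco n p j) * (w ^ (-(p - 1 - (k:ℝ) - (j:ℝ)) - 1) * Real.exp (-1/w)))
      = ∑ j ∈ Finset.range (n+1), (dco s p k * dco n p j) * Real.Gamma (p - 1 - k - j) := by
    intro k hk
    rw [MeasureTheory.integral_finset_sum _ (fun j hj => hint k hk j hj)]
    refine Finset.sum_congr rfl fun j hj => ?_
    rw [MeasureTheory.integral_const_mul, mom (hpos k hk j hj)]
  rw [Finset.sum_congr rfl heval, Sval p s n hsn]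
end

section
/- The finite bivariate N-Konhauser polynomial ₖN_{s;υ}^{(p,q)}(t,w) equals s! Γ(p-s) Σ_{k=0}^{s} (-1)^k t^{s-k} Z_{s-k}^{(q)}(w;υ) / (k! Γ(p-2s+k) Γ(q+1+υ(s-k))). -/
open Real MeasureTheory Finset

lemma poch_neg_nat (s : ℕ) : ∀ n, n ≤ s →
    poch (-(s : ℝ)) n = (-1) ^ n * (s.factorial : ℝ) / ((s - n).factorial : ℝ) := by
  intro n
  induction n with
  | zero => intro _; simp only [poch, Finset.range_zero, Finset.prod_empty, pow_zero, one_mul,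
      Nat.sub_zero]; rw [div_self (by positivity)]
  | succ n ih =>
    intro h
    have hn : n ≤ s := Nat.le_of_succ_le h
    have hlt : n < s := h
    rw [poch, Finset.prod_range_succ, ← poch, ih hn]
    have h1 : s - n = (s - (n + 1)) + 1 := by omega
    have h2 : (-(s : ℝ) + n) = -(((s - n : ℕ) : ℝ)) := by
      have : ((s - n : ℕ) : ℝ) = (s : ℝ) - n := by
        push_cast [Nat.cast_sub hn]; ring
      rw [this]; ring
    have hne : ((s - (n + 1)).factorial : ℝ) ≠ 0 := by positivity
    have hsn : ((s : ℝ) - n) ≠ 0 := by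
      have : (n : ℝ) < s := by exact_mod_cast hlt
      linarith
    have h3 : (((s - n).factorial : ℕ) : ℝ) = ((s : ℝ) - n) * ((s - (n+1)).factorial : ℝ) := by
      rw [h1, Nat.factorial_succ]
      push_cast [Nat.cast_sub h]
      ring
    rw [h2, h3]
    have h4 : -(((s - n : ℕ)) : ℝ) = -((s : ℝ) - n) := by
      push_cast [Nat.cast_sub hn]; ring
    rw [h4]
    field_simp
    ring

theorem NK_eq_konZ_expansion (υ : ℕ) (hυ : 0 < υ) (p q : ℝ) (hq : q > -1) (s : ℕ)
    (hs : (s : ℝ) < (p - 1) / 2) (t w : ℝ) :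
    NK s υ p q t w =
      (s.factorial : ℝ) * Real.Gamma (p - (s : ℝ)) *
        ∑ k ∈ Finset.range (s + 1),
          (-1 : ℝ) ^ k * t ^ (s - k) * konZ (s - k) q υ w /
            ((k.factorial : ℝ) * Real.Gamma (p - 2 * (s : ℝ) + (k : ℝ)) *
              Real.Gamma (q + 1 + ((υ * (s - k) : ℕ) : ℝ))) := by
  rw [NK, Finset.mul_sum, Finset.mul_sum]
  refine Finset.sum_congr rfl fun k hk => ?_
  rw [Finset.mem_range] at hk
  have hk' : k ≤ s := Nat.lt_succ_iff.mp hk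
  rw [konZ]
  rw [Finset.mul_sum]
  rw [show (∑ l ∈ Finset.range (s - k + 1),
      (-1 : ℝ) ^ l * ((s-k).choose l : ℝ) * w ^ (υ * l) / Real.Gamma ((υ : ℝ) * (l : ℝ) + q + 1))
    = ∑ l ∈ Finset.range (s - k + 1),
      (-1 : ℝ) ^ l * ((s-k).choose l : ℝ) * w ^ (υ * l) / Real.Gamma ((υ : ℝ) * (l : ℝ) + q + 1) from rfl]
  rw [show ((s.factorial : ℝ) * Real.Gamma (p - (s : ℝ)) *
      ((-1 : ℝ) ^ k * t ^ (s - k) *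
        ((Real.Gamma ((υ : ℝ) * ((s - k : ℕ) : ℝ) + q + 1) / (s-k).factorial) *
          ∑ l ∈ Finset.range ((s-k) + 1),
            (-1 : ℝ) ^ l * ((s-k).choose l : ℝ) * w ^ (υ * l) / Real.Gamma ((υ : ℝ) * (l : ℝ) + q + 1)) /
        ((k.factorial : ℝ) * Real.Gamma (p - 2 * (s : ℝ) + (k : ℝ)) *
          Real.Gamma (q + 1 + ((υ * (s - k) : ℕ) : ℝ)))))
    = ∑ l ∈ Finset.range ((s-k) + 1),
      (s.factorial : ℝ) * Real.Gamma (p - (s : ℝ)) *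
      ((-1 : ℝ) ^ k * t ^ (s - k) *
        ((Real.Gamma ((υ : ℝ) * ((s - k : ℕ) : ℝ) + q + 1) / (s-k).factorial) *
          ((-1 : ℝ) ^ l * ((s-k).choose l : ℝ) * w ^ (υ * l) / Real.Gamma ((υ : ℝ) * (l : ℝ) + q + 1))) /
        ((k.factorial : ℝ) * Real.Gamma (p - 2 * (s : ℝ) + (k : ℝ)) *
          Real.Gamma (q + 1 + ((υ * (s - k) : ℕ) : ℝ)))) from by
    simp only [Finset.mul_sum, Finset.sum_div]]
  refine Finset.sum_congr rfl fun m hm => ?_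
  rw [Finset.mem_range] at hm
  have hm' : m ≤ s - k := Nat.lt_succ_iff.mp hm
  have hkm : k + m ≤ s := by omega
  -- nonvanishing facts
  have hp : (2 : ℝ) * s + 1 < p := by linarith [hs]
  have hΓ1 : Real.Gamma (p - 2 * (s : ℝ) + (k : ℝ)) ≠ 0 := by
    apply ne_of_gt; apply Real.Gamma_pos_of_pos
    have : (0:ℝ) ≤ (k:ℝ) := Nat.cast_nonneg k
    linarith
  have hΓ2 : Real.Gamma ((υ : ℝ) * (m : ℝ) + q + 1) ≠ 0 := by
    apply ne_of_gt; apply Real.Gamma_pos_of_pos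
    have : (0:ℝ) ≤ (υ:ℝ) * m := by positivity
    linarith
  have hΓ3 : Real.Gamma (q + 1 + ((υ * (s - k) : ℕ) : ℝ)) ≠ 0 := by
    apply ne_of_gt; apply Real.Gamma_pos_of_pos
    have : (0:ℝ) ≤ ((υ * (s - k) : ℕ) : ℝ) := Nat.cast_nonneg _
    linarith
  have hΓ2' : Real.Gamma (q + 1 + (υ : ℝ) * (m : ℝ)) = Real.Gamma ((υ : ℝ) * (m : ℝ) + q + 1) := by
    ring_nf
  have hΓ3' : Real.Gamma ((υ : ℝ) * ((s - k : ℕ) : ℝ) + q + 1)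
      = Real.Gamma (q + 1 + ((υ * (s - k) : ℕ) : ℝ)) := by
    push_cast; ring_nf
  have hpoch := poch_neg_nat s (k + m) hkm
  have hchoose : (((s - k).choose m : ℕ) : ℝ) * m.factorial * (s - k - m).factorial
      = ((s - k).factorial : ℝ) := by
    exact_mod_cast congrArg (Nat.cast (R := ℝ))
      (Nat.choose_mul_factorial_mul_factorial hm')
  have hsub : s - (k + m) = s - k - m := by omega
  rw [hpoch, hΓ2', hΓ3', hsub, pow_add]
  set g1 := Real.Gamma (p - 2 * (s : ℝ) + (k : ℝ)) with hg1
  set g2 := Real.Gamma ((υ : ℝ) * (m : ℝ) + q + 1) with hg2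
  set g3 := Real.Gamma (q + 1 + ((υ * (s - k) : ℕ) : ℝ)) with hg3
  have hf1 : (k.factorial : ℝ) ≠ 0 := by positivity
  have hf2 : (m.factorial : ℝ) ≠ 0 := by positivity
  have hf3 : ((s - k - m).factorial : ℝ) ≠ 0 := by positivity
  have hf4 : ((s - k).factorial : ℝ) ≠ 0 := by positivity
  field_simp
  rw [← hchoose]
  ring
end

section
/- The generalized Laguerre-Konhauser polynomial satisfies ᵤL_s^{(p,q)}(t,w) = (t^p w^q / (s+1)_p) · ₖL_{s;υ}^{(p,q)}(t,w), where ₖL_{s;υ}^{(p,q)} is the bivariate Laguerre-Konhauser polynomial and (s+1)_p = Γ(s+p+1)/Γ(s+1). -/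
open Real MeasureTheory Finset

lemma poch_neg_fac (s n : ℕ) (h : n ≤ s) :
    poch (-(s:ℝ)) n * (s - n).factorial = (-1:ℝ)^n * s.factorial := by
  induction n with
  | zero => simp [poch]
  | succ n ih =>
    have hn : n ≤ s := Nat.le_of_succ_le h
    have hpoch : poch (-(s:ℝ)) (n+1) = poch (-(s:ℝ)) n * (-(s:ℝ) + n) := by
      simp [poch, Finset.prod_range_succ]
    have hsub : s - n = (s - (n+1)) + 1 := by omega
    have hfac : ((s - n).factorial : ℝ) = (((s - (n+1)) : ℕ) + 1) * (s - (n+1)).factorial := by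
      rw [hsub, Nat.factorial_succ, Nat.cast_mul, Nat.cast_add, Nat.cast_one]
    have hcast : -(s:ℝ) + n = -(((s - (n+1)):ℕ) + 1 : ℝ) := by
      have : ((s - (n+1) : ℕ) : ℝ) = (s:ℝ) - (n+1) := by
        have := Nat.cast_sub h (R := ℝ); push_cast at this ⊢; linarith
      rw [this]; ring
    have := ih hn
    rw [hpoch, hcast]
    have h2 : poch (-(s:ℝ)) n * ((s - n).factorial : ℝ) = (-1:ℝ)^n * s.factorial := this
    rw [hfac] at h2
    linear_combination -h2

theorem LKgen_eq_KL (υ : ℕ) (hυ : 0 < υ) (p q : ℝ) (hp : p > -1) (hq : q > -1) (s : ℕ)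
    (t w : ℝ) (ht : 0 < t) (hw : 0 < w) :
    LKgen s υ p q t w =
      t ^ p * w ^ q / (Real.Gamma ((s : ℝ) + p + 1) / Real.Gamma ((s : ℝ) + 1)) *
        KL s υ p q t w := by
  have hG1 : Real.Gamma ((s:ℝ) + 1) = s.factorial := by
    exact_mod_cast Real.Gamma_nat_eq_factorial s
  have hGs : Real.Gamma ((s:ℝ) + p + 1) = Real.Gamma (p + 1 + (s:ℝ)) := by ring_nf
  have hGspos : 0 < Real.Gamma (p + 1 + (s:ℝ)) := by
    apply Real.Gamma_pos_of_pos
    have : (0:ℝ) ≤ s := Nat.cast_nonneg s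
    linarith
  have hfacpos : (0:ℝ) < s.factorial := by positivity
  unfold LKgen KL
  rw [hGs, hG1]
  rw [show t ^ p * w ^ q / (Real.Gamma (p + 1 + (s:ℝ)) / (s.factorial : ℝ)) *
      ((Real.Gamma (p + 1 + (s:ℝ)) / (s.factorial : ℝ)) * ∑ k ∈ Finset.range (s + 1), ∑ m ∈ Finset.range (s - k + 1),
      poch (-(s : ℝ)) (k + m) * t ^ k * w ^ (υ * m) /
        (Real.Gamma (p + 1 + (k : ℝ)) * Real.Gamma (q + 1 + (υ : ℝ) * (m : ℝ)) *
          k.factorial * m.factorial)) =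
      t ^ p * w ^ q * ∑ k ∈ Finset.range (s + 1), ∑ m ∈ Finset.range (s - k + 1),
      poch (-(s : ℝ)) (k + m) * t ^ k * w ^ (υ * m) /
        (Real.Gamma (p + 1 + (k : ℝ)) * Real.Gamma (q + 1 + (υ : ℝ) * (m : ℝ)) *
          k.factorial * m.factorial) from by
    field_simp]
  rw [Finset.mul_sum, Finset.mul_sum]
  refine Finset.sum_congr rfl fun k hk => ?_
  rw [Finset.mul_sum, Finset.mul_sum]
  refine Finset.sum_congr rfl fun m hm => ?_
  simp only [Finset.mem_range] at hk hm
  have hk' : k ≤ s := Nat.lt_succ_iff.mp hk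
  have hkm : k + m ≤ s := by omega
  have hpoch := poch_neg_fac s (k + m) hkm
  have hsub : s - k - m = s - (k + m) := by omega
  have htk : t ^ ((k:ℝ) + p) = t ^ k * t ^ p := by
    rw [Real.rpow_add ht, Real.rpow_natCast]
  have hwm : w ^ ((υ:ℝ) * (m:ℝ) + q) = w ^ (υ * m) * w ^ q := by
    rw [Real.rpow_add hw, show ((υ:ℝ) * (m:ℝ)) = ((υ * m : ℕ) : ℝ) by push_cast; ring,
      Real.rpow_natCast]
  have hG2 : Real.Gamma ((k:ℝ) + p + 1) = Real.Gamma (p + 1 + (k:ℝ)) := by ring_nf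
  have hG3 : Real.Gamma (q + (υ:ℝ) * (m:ℝ) + 1) = Real.Gamma (q + 1 + (υ:ℝ) * (m:ℝ)) := by
    ring_nf
  have hG2pos : 0 < Real.Gamma (p + 1 + (k:ℝ)) := by
    apply Real.Gamma_pos_of_pos
    have : (0:ℝ) ≤ k := Nat.cast_nonneg k
    linarith
  have hG3pos : 0 < Real.Gamma (q + 1 + (υ:ℝ) * (m:ℝ)) := by
    apply Real.Gamma_pos_of_pos
    have : (0:ℝ) ≤ (υ:ℝ) * (m:ℝ) := by positivity
    linarith
  rw [htk, hwm, hG2, hG3, hsub]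
  have hkf : (0:ℝ) < k.factorial := by positivity
  have hmf : (0:ℝ) < m.factorial := by positivity
  have hskm : (0:ℝ) < (s - (k + m)).factorial := by positivity
  field_simp
  linear_combination (-1 : ℝ) * hpoch
end

section
/- The finite bivariate N-Konhauser polynomials satisfy the transition formulas ₖN_{s;υ}^{(p,q)}(t,w) = s! t^s ₖL_{s;υ}^{(p-2s-1,q)}(1/t, w) and ₖL_{s;υ}^{(p,q)}(t,w) = (t^s/s!) ₖN_{s;υ}^{(p+2s+1,q)}(1/t, w) for t > 0. -/
open Real MeasureTheory Finset

theorem NK_KL_transition (υ : ℕ) (hυ : 0 < υ) (p q : ℝ) (hq : q > -1) (s : ℕ)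
    (t w : ℝ) (ht : 0 < t) :
    NK s υ p q t w = (s.factorial : ℝ) * t ^ s * KL s υ (p - 2 * (s : ℝ) - 1) q (1 / t) w ∧
      KL s υ p q t w = t ^ s / (s.factorial : ℝ) * NK s υ (p + 2 * (s : ℝ) + 1) q (1 / t) w := by
  have ht' : (t:ℝ) ≠ 0 := ne_of_gt ht
  have hfac : (s.factorial : ℝ) ≠ 0 := by positivity
  constructor
  · unfold NK KL
    have h1 : p - 2*(s:ℝ) - 1 + 1 + (s:ℝ) = p - (s:ℝ) := by ring
    have h2 : ∀ k : ℕ, p - 2*(s:ℝ) - 1 + 1 + (k:ℝ) = p - 2*(s:ℝ) + (k:ℝ) := fun k => by ring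
    simp only [h1, h2]
    rw [show (s.factorial:ℝ) * t^s * (Real.Gamma (p-(s:ℝ))/(s.factorial:ℝ) *
        (∑ k ∈ Finset.range (s + 1), ∑ m ∈ Finset.range (s - k + 1),
          poch (-(s : ℝ)) (k + m) * (1/t) ^ k * w ^ (υ * m) /
            (Real.Gamma (p - 2 * (s : ℝ) + (k : ℝ)) * Real.Gamma (q + 1 + (υ : ℝ) * (m : ℝ)) *
              k.factorial * m.factorial))) =
      Real.Gamma (p-(s:ℝ)) * (t^s * ∑ k ∈ Finset.range (s + 1), ∑ m ∈ Finset.range (s - k + 1),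
          poch (-(s : ℝ)) (k + m) * (1/t) ^ k * w ^ (υ * m) /
            (Real.Gamma (p - 2 * (s : ℝ) + (k : ℝ)) * Real.Gamma (q + 1 + (υ : ℝ) * (m : ℝ)) *
              k.factorial * m.factorial)) from by field_simp]
    congr 1
    rw [Finset.mul_sum]
    refine Finset.sum_congr rfl fun k hk => ?_
    rw [Finset.mul_sum]
    refine Finset.sum_congr rfl fun m _ => ?_
    have hks : k ≤ s := Nat.lt_succ_iff.mp (Finset.mem_range.mp hk)
    have hts : t ^ (s - k) = t ^ s * (1/t) ^ k := by
      rw [one_div, inv_pow, pow_sub₀ t ht' hks]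
    rw [hts]; ring
  · unfold NK KL
    have h1 : p + 2*(s:ℝ) + 1 - (s:ℝ) = p + 1 + (s:ℝ) := by ring
    have h2 : ∀ k : ℕ, p + 2*(s:ℝ) + 1 - 2*(s:ℝ) + (k:ℝ) = p + 1 + (k:ℝ) := fun k => by ring
    simp only [h1, h2]
    rw [show t^s/(s.factorial:ℝ) * (Real.Gamma (p+1+(s:ℝ)) *
        (∑ k ∈ Finset.range (s + 1), ∑ m ∈ Finset.range (s - k + 1),
          poch (-(s : ℝ)) (k + m) * (1/t) ^ (s-k) * w ^ (υ * m) /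
            (Real.Gamma (p + 1 + (k : ℝ)) * Real.Gamma (q + 1 + (υ : ℝ) * (m : ℝ)) *
              k.factorial * m.factorial))) =
      Real.Gamma (p+1+(s:ℝ))/(s.factorial:ℝ) * (t^s * ∑ k ∈ Finset.range (s + 1), ∑ m ∈ Finset.range (s - k + 1),
          poch (-(s : ℝ)) (k + m) * (1/t) ^ (s-k) * w ^ (υ * m) /
            (Real.Gamma (p + 1 + (k : ℝ)) * Real.Gamma (q + 1 + (υ : ℝ) * (m : ℝ)) *
              k.factorial * m.factorial)) from by field_simp]
    congr 1
    rw [Finset.mul_sum]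
    refine Finset.sum_congr rfl fun k hk => ?_
    rw [Finset.mul_sum]
    refine Finset.sum_congr rfl fun m _ => ?_
    have hks : k ≤ s := Nat.lt_succ_iff.mp (Finset.mem_range.mp hk)
    have hts : t ^ k = t ^ s * (1/t) ^ (s-k) := by
      rw [one_div, inv_pow, eq_comm, mul_inv_eq_iff_eq_mul₀ (pow_ne_zero _ ht'),
        ← pow_add, Nat.add_sub_cancel' hks]
    rw [hts]; ring
end

section
/- The first set of finite bivariate N-Konhauser polynomials satisfies the m-fold derivative relation ∂_t^m ( t^{s-p+m} ₖN_{s;υ}^{(p,q)}(t,w) ) = (-1)^m (Γ(p-s)/Γ(p-m-s)) t^{s-p} ₖN_{s;υ}^{(p-m,q)}(t,w) for t > 0 and integers 0 ≤ m ≤ p - 2s - 1. -/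
open Real MeasureTheory Finset

lemma gamma_shift_s15 : ∀ (m : ℕ) (a : ℝ), (m : ℝ) < a →
    Real.Gamma a = (∏ i ∈ Finset.range m, (a - 1 - i)) * Real.Gamma (a - m) := by
  intro m
  induction m with
  | zero => intro a _; simp
  | succ n ih =>
    intro a ha
    have h1 : ((n : ℝ)) < a - 1 := by push_cast at ha ⊢; linarith
    have h0 : a - 1 ≠ 0 := ((n.cast_nonneg.trans_lt h1)).ne'
    have key : Real.Gamma a = (a - 1) * Real.Gamma (a - 1) := by
      have := Real.Gamma_add_one h0
      rw [show a - 1 + 1 = a by ring] at this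
      rw [this]
    have hp : (∏ i ∈ Finset.range n, (a - 1 - 1 - (i : ℝ))) =
        ∏ i ∈ Finset.range n, (a - 1 - ((i : ℝ) + 1)) := by
      refine Finset.prod_congr rfl fun x _ => by ring
    rw [key, ih (a - 1) h1, Finset.prod_range_succ']
    push_cast
    rw [show a - (↑n + 1) = a - 1 - ↑n by ring]
    rw [show (∏ i ∈ Finset.range n, (a - 1 - (↑i + 1))) = ∏ i ∈ Finset.range n, (a - 1 - 1 - (i:ℝ)) from hp.symm ▸ rfl]
    ring

lemma iteratedDeriv_sum_rpow {ι : Type*} (S : Finset ι) (c e : ι → ℝ) :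
    ∀ (m : ℕ) (t : ℝ), 0 < t →
      iteratedDeriv m (fun x : ℝ => ∑ i ∈ S, c i * x ^ (e i)) t =
        ∑ i ∈ S, c i * (∏ j ∈ Finset.range m, (e i - j)) * t ^ (e i - m) := by
  intro m
  induction m with
  | zero => intro t ht; simp [mul_comm]
  | succ n ih =>
    intro t ht
    rw [iteratedDeriv_succ]
    have hev : iteratedDeriv n (fun x : ℝ => ∑ i ∈ S, c i * x ^ (e i)) =ᶠ[nhds t]
        fun x => ∑ i ∈ S, c i * (∏ j ∈ Finset.range n, (e i - j)) * x ^ (e i - n) := by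
      filter_upwards [Ioi_mem_nhds ht] with x hx
      exact ih x hx
    rw [hev.deriv_eq]
    have hd : HasDerivAt (fun x : ℝ => ∑ i ∈ S, c i * (∏ j ∈ Finset.range n, (e i - j)) * x ^ (e i - n))
        (∑ i ∈ S, c i * (∏ j ∈ Finset.range n, (e i - j)) * ((e i - n) * t ^ (e i - n - 1))) t := by
      apply HasDerivAt.fun_sum
      intro i _
      exact (Real.hasDerivAt_rpow_const (Or.inl ht.ne')).const_mul _
    rw [hd.deriv]
    refine Finset.sum_congr rfl fun i _ => ?_
    rw [Finset.prod_range_succ]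
    push_cast
    rw [show e i - (↑n + 1) = e i - ↑n - 1 by ring]
    ring

theorem NK_iteratedDeriv_t (υ : ℕ) (hυ : 0 < υ) (p q : ℝ) (hq : q > -1) (s : ℕ)
    (hs : (s : ℝ) < (p - 1) / 2) (m : ℕ) (hm : (m : ℝ) ≤ p - 2 * (s : ℝ) - 1)
    (t w : ℝ) (ht : 0 < t) :
    iteratedDeriv m (fun x => x ^ ((s : ℝ) - p + (m : ℝ)) * NK s υ p q x w) t =
      (-1 : ℝ) ^ m * (Real.Gamma (p - (s : ℝ)) / Real.Gamma (p - (m : ℝ) - (s : ℝ))) *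
        t ^ ((s : ℝ) - p) * NK s υ (p - (m : ℝ)) q t w := by
  classical
  set S : Finset ((_ : ℕ) × ℕ) :=
    (Finset.range (s + 1)).sigma (fun k => Finset.range (s - k + 1)) with hS
  set c : ((_ : ℕ) × ℕ) → ℝ := fun i =>
    Real.Gamma (p - (s : ℝ)) * (poch (-(s : ℝ)) (i.1 + i.2) * w ^ (υ * i.2)) /
      (Real.Gamma (p - 2 * (s : ℝ) + (i.1 : ℝ)) * Real.Gamma (q + 1 + (υ : ℝ) * (i.2 : ℝ)) *
        (i.1.factorial : ℝ) * (i.2.factorial : ℝ)) with hc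
  set e : ((_ : ℕ) × ℕ) → ℝ := fun i => 2 * (s : ℝ) - (i.1 : ℝ) - p + (m : ℝ) with he
  have hev : (fun x => x ^ ((s : ℝ) - p + (m : ℝ)) * NK s υ p q x w) =ᶠ[nhds t]
      (fun x => ∑ i ∈ S, c i * x ^ (e i)) := by
    filter_upwards [Ioi_mem_nhds ht] with x hx
    have hx0 : (0 : ℝ) < x := hx
    rw [NK, Finset.mul_sum]
    simp only [Finset.mul_sum]
    rw [hS, Finset.sum_sigma]
    refine Finset.sum_congr rfl fun k hk => Finset.sum_congr rfl fun j hj => ?_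
    have hk' : k ≤ s := Nat.lt_succ_iff.mp (Finset.mem_range.mp hk)
    have hcast : ((s - k : ℕ) : ℝ) = (s : ℝ) - (k : ℝ) := Nat.cast_sub hk'
    have hnp : (x : ℝ) ^ (s - k) = x ^ ((s : ℝ) - (k : ℝ)) := by
      rw [← Real.rpow_natCast x (s - k), hcast]
    have hxp : x ^ ((s : ℝ) - p + (m : ℝ)) * x ^ ((s : ℝ) - (k : ℝ)) =
        x ^ (2 * (s : ℝ) - (k : ℝ) - p + (m : ℝ)) := by
      rw [← Real.rpow_add hx0]; ring_nf
    simp only [hc, he]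
    rw [hnp, ← hxp]
    ring
  rw [Filter.EventuallyEq.iteratedDeriv_eq m hev,
    iteratedDeriv_sum_rpow S c e m t ht]
  rw [NK, Finset.mul_sum]
  simp only [Finset.mul_sum]
  rw [hS, Finset.sum_sigma]
  refine Finset.sum_congr rfl fun k hk => Finset.sum_congr rfl fun j hj => ?_
  simp only [hc, he]
  have hk' : k ≤ s := Nat.lt_succ_iff.mp (Finset.mem_range.mp hk)
  have hcast : ((s - k : ℕ) : ℝ) = (s : ℝ) - (k : ℝ) := Nat.cast_sub hk'
  have hb : (m : ℝ) < p - 2 * (s : ℝ) + (k : ℝ) := by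
    have : (0 : ℝ) ≤ (k : ℝ) := Nat.cast_nonneg _
    linarith
  have hshift := gamma_shift_s15 m (p - 2 * (s : ℝ) + (k : ℝ)) hb
  set P : ℝ := ∏ i ∈ Finset.range m, (p - 2 * (s : ℝ) + (k : ℝ) - 1 - (i : ℝ)) with hP
  have hPpos : 0 < P := by
    rw [hP]
    apply Finset.prod_pos
    intro i him
    have h1 : (i : ℝ) + 1 ≤ (m : ℝ) := by exact_mod_cast Finset.mem_range.mp him
    have : (0 : ℝ) ≤ (k : ℝ) := Nat.cast_nonneg _
    linarith
  have hprod : (∏ i ∈ Finset.range m, (2 * (s : ℝ) - (k : ℝ) - p + (m : ℝ) - (i : ℝ))) =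
      (-1 : ℝ) ^ m * P := by
    have h1 : (∏ i ∈ Finset.range m, (2 * (s : ℝ) - (k : ℝ) - p + (m : ℝ) - (i : ℝ))) =
        ∏ i ∈ Finset.range m, ((-1 : ℝ) * ((p - 2 * (s : ℝ) + (k : ℝ) - (m : ℝ)) + (i : ℝ))) := by
      refine Finset.prod_congr rfl fun i _ => by ring
    have h2 : P = ∏ i ∈ Finset.range m, ((p - 2 * (s : ℝ) + (k : ℝ) - (m : ℝ)) + (i : ℝ)) := by
      rw [hP,
        ← Finset.prod_range_reflect (fun i => p - 2 * (s : ℝ) + (k : ℝ) - 1 - (i : ℝ)) m]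
      refine Finset.prod_congr rfl fun i him => ?_
      have him' : i + 1 ≤ m := Finset.mem_range.mp him
      have hc2 : ((m - 1 - i : ℕ) : ℝ) = (m : ℝ) - 1 - (i : ℝ) := by
        have h3 : i ≤ m - 1 := Nat.le_sub_one_of_lt him'
        rw [Nat.cast_sub h3, Nat.cast_sub (Nat.one_le_iff_ne_zero.mpr (by omega))]
        push_cast; ring
      rw [hc2]; ring
    rw [h1, Finset.prod_mul_distrib, Finset.prod_const, ← h2]
    simp [Finset.card_range]
  have hΓ2pos : 0 < Real.Gamma (p - 2 * (s : ℝ) + (k : ℝ) - (m : ℝ)) := by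
    apply Real.Gamma_pos_of_pos
    have : (0 : ℝ) ≤ (k : ℝ) := Nat.cast_nonneg _
    linarith
  have hΓq : (0 : ℝ) < Real.Gamma (q + 1 + (υ : ℝ) * (j : ℝ)) := by
    apply Real.Gamma_pos_of_pos
    have : (0 : ℝ) ≤ (υ : ℝ) * (j : ℝ) := by positivity
    linarith
  have hΓms : (0 : ℝ) < Real.Gamma (p - (m : ℝ) - (s : ℝ)) := by
    apply Real.Gamma_pos_of_pos
    have : (0 : ℝ) ≤ (s : ℝ) := Nat.cast_nonneg _
    linarith
  have hfk : ((k.factorial : ℝ)) ≠ 0 := Nat.cast_ne_zero.mpr k.factorial_ne_zero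
  have hfj : ((j.factorial : ℝ)) ≠ 0 := Nat.cast_ne_zero.mpr j.factorial_ne_zero
  have hexp : t ^ (2 * (s : ℝ) - (k : ℝ) - p + (m : ℝ) - (m : ℝ)) =
      t ^ (s - k) * t ^ ((s : ℝ) - p) := by
    rw [show 2 * (s : ℝ) - (k : ℝ) - p + (m : ℝ) - (m : ℝ) =
        ((s : ℝ) - (k : ℝ)) + ((s : ℝ) - p) by ring,
      Real.rpow_add ht, ← hcast, Real.rpow_natCast]
  have harg : p - (m : ℝ) - 2 * (s : ℝ) + (k : ℝ) = p - 2 * (s : ℝ) + (k : ℝ) - (m : ℝ) := by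
    ring
  rw [hprod, hexp, harg, hshift]
  field_simp
end

section
/- The first set of finite bivariate N-Konhauser polynomials satisfies ∂_w^m ( w^q ₖN_{s;υ}^{(p,q)}(t,w) ) = w^{q-m} ₖN_{s;υ}^{(p,q-m)}(t,w) for w > 0 and integers 0 ≤ m ≤ q. -/
open Real MeasureTheory Finset

lemma NK_step (υ : ℕ) (p : ℝ) (s : ℕ) (t : ℝ) (a : ℝ) (ha : 0 < a) {w : ℝ} (hw : 0 < w) :
    deriv (fun x => x ^ a * NK s υ p a t x) w = w ^ (a - 1) * NK s υ p (a - 1) t w := by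
  have heq : (fun x : ℝ => x ^ a * NK s υ p a t x) =ᶠ[nhds w]
      (fun x : ℝ => Real.Gamma (p - (s : ℝ)) *
        ∑ k ∈ Finset.range (s + 1), ∑ m ∈ Finset.range (s - k + 1),
          poch (-(s : ℝ)) (k + m) * t ^ (s - k) /
            (Real.Gamma (p - 2 * (s : ℝ) + (k : ℝ)) * Real.Gamma (a + 1 + (υ : ℝ) * (m : ℝ)) *
              k.factorial * m.factorial) * x ^ (a + (υ : ℝ) * (m : ℝ))) := by
    filter_upwards [eventually_gt_nhds hw] with x hx
    unfold NK
    rw [mul_left_comm]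
    congr 1
    rw [Finset.mul_sum]
    refine Finset.sum_congr rfl fun k _ => ?_
    rw [Finset.mul_sum]
    refine Finset.sum_congr rfl fun m _ => ?_
    rw [Real.rpow_add hx, ← Real.rpow_natCast x (υ * m)]
    push_cast
    ring
  rw [heq.deriv_eq]
  have hd : ∀ k ∈ Finset.range (s + 1), ∀ m ∈ Finset.range (s - k + 1),
      HasDerivAt (fun x : ℝ => poch (-(s : ℝ)) (k + m) * t ^ (s - k) /
            (Real.Gamma (p - 2 * (s : ℝ) + (k : ℝ)) * Real.Gamma (a + 1 + (υ : ℝ) * (m : ℝ)) *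
              k.factorial * m.factorial) * x ^ (a + (υ : ℝ) * (m : ℝ)))
        (poch (-(s : ℝ)) (k + m) * t ^ (s - k) /
            (Real.Gamma (p - 2 * (s : ℝ) + (k : ℝ)) * Real.Gamma (a + 1 + (υ : ℝ) * (m : ℝ)) *
              k.factorial * m.factorial) * ((a + (υ : ℝ) * (m : ℝ)) * w ^ (a + (υ : ℝ) * (m : ℝ) - 1))) w :=
    fun k _ m _ => ((Real.hasDerivAt_rpow_const (Or.inl hw.ne'))).const_mul _
  have H := (HasDerivAt.fun_sum (fun k hk => HasDerivAt.fun_sum (fun m hm => hd k hk m hm))).const_mul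
    (Real.Gamma (p - (s : ℝ)))
  rw [H.deriv]
  unfold NK
  rw [mul_left_comm]
  congr 1
  rw [Finset.mul_sum]
  refine Finset.sum_congr rfl fun k _ => ?_
  rw [Finset.mul_sum]
  refine Finset.sum_congr rfl fun m _ => ?_
  have hz : a + (υ : ℝ) * (m : ℝ) ≠ 0 := by positivity
  have hg : Real.Gamma (a + 1 + (υ : ℝ) * (m : ℝ))
      = (a + (υ : ℝ) * (m : ℝ)) * Real.Gamma (a + (υ : ℝ) * (m : ℝ)) := by
    rw [show a + 1 + (υ : ℝ) * (m : ℝ) = (a + (υ : ℝ) * (m : ℝ)) + 1 by ring,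
      Real.Gamma_add_one hz]
  have hw1 : w ^ (a + (υ : ℝ) * (m : ℝ) - 1) = w ^ (a - 1) * w ^ (υ * m) := by
    rw [← Real.rpow_natCast w (υ * m), ← Real.rpow_add hw]
    push_cast; ring_nf
  have hq : a - 1 + 1 + (υ : ℝ) * (m : ℝ) = a + (υ : ℝ) * (m : ℝ) := by ring
  have key : ∀ A D W : ℝ, A / ((a + (υ : ℝ) * (m : ℝ)) * D) * ((a + (υ : ℝ) * (m : ℝ)) * W)
      = W * (A / D) := by
    intro A D W
    rcases eq_or_ne D 0 with h | h
    · simp [h]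
    · field_simp
  rw [hg, hw1, hq, show Real.Gamma (p - 2 * (s : ℝ) + (k : ℝ)) *
      ((a + (υ : ℝ) * (m : ℝ)) * Real.Gamma (a + (υ : ℝ) * (m : ℝ))) *
      (k.factorial : ℝ) * (m.factorial : ℝ)
      = (a + (υ : ℝ) * (m : ℝ)) * (Real.Gamma (p - 2 * (s : ℝ) + (k : ℝ)) *
        Real.Gamma (a + (υ : ℝ) * (m : ℝ)) * (k.factorial : ℝ) * (m.factorial : ℝ)) from by ring,
    key]
  rw [mul_comm, div_mul_eq_mul_div]
  ring_nf

theorem NK_iteratedDeriv_w (υ : ℕ) (hυ : 0 < υ) (p q : ℝ) (hq : q > -1) (s : ℕ)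
    (hs : (s : ℝ) < (p - 1) / 2) (m : ℕ) (hm : (m : ℝ) ≤ q) (t w : ℝ) (hw : 0 < w) :
    iteratedDeriv m (fun x => x ^ q * NK s υ p q t x) w =
      w ^ (q - (m : ℝ)) * NK s υ p (q - (m : ℝ)) t w := by
  induction m generalizing q with
  | zero => simp
  | succ n ih =>
    have h1 : (1 : ℝ) ≤ q := le_trans (by push_cast; linarith [Nat.cast_nonneg (α := ℝ) n]) hm
    rw [iteratedDeriv_succ']
    have heq : deriv (fun x : ℝ => x ^ q * NK s υ p q t x) =ᶠ[nhds w]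
        fun x : ℝ => x ^ (q - 1) * NK s υ p (q - 1) t x := by
      filter_upwards [eventually_gt_nhds hw] with x hx
      exact NK_step υ p s t q (by linarith) hx
    rw [heq.iteratedDeriv_eq n, ih (q - 1) (by linarith) (by push_cast at hm ⊢; linarith)]
    have : q - 1 - (n : ℝ) = q - ((n + 1 : ℕ) : ℝ) := by push_cast; ring
    rw [this]
end
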